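/- arXiv:0801.3989 — 10 statements merged into one kernel-verified Lean document; each statement's English description precedes it below -/
import Mathlib

section
/- For all real numbers x > 0 and a < 1 with x + a > 0, one has Γ(1−a)·Γ(x+a)/Γ(x) = ∏_{k=1}^{∞} [k(k+x−1)] / [(k−a)(k+x+a−1)], where Γ is the real Gamma function and the infinite product converges. -/
/-!
Apply Euler's limit formula `Γ(s) = lim n^s n! / (s (s+1) ⋯ (s+n))` to `s = 1 - a`, `t = x + a`
and `s + t - 1 = x`: the powers of `n` cancel up to a single factor `n`, so that
`Γₙ(s) Γₙ(t) / Γₙ(s+t-1)` is `n/(n+1)` times the `(n+1)`-st partial product. The product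
converges because its factors are `1 - (s-1)(t-1)/((s+k)(t+k)) = 1 + O(k⁻²)`.
-/

open Filter Finset Real Topology
open scoped Nat

noncomputable def gammaRatioFactor (s t : ℝ) (k : ℕ) : ℝ :=
  ((k + 1) * (s + t - 1 + k)) / ((s + k) * (t + k))

section

variable {s t : ℝ}

lemma summable_one_div_add_mul_add (hs : 0 < s) (ht : 0 < t) :
    Summable fun k : ℕ => 1 / ((s + k) * (t + k)) := by
  have hsum : Summable fun k : ℕ => 1 / |(k : ℝ) + min s t| ^ (2 : ℝ) :=
    (summable_one_div_nat_add_rpow _ 2).2 one_lt_two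
  refine hsum.of_nonneg_of_le (fun k => by positivity) fun k => ?_
  rw [abs_of_pos (by positivity), rpow_two]
  gcongr
  rw [sq]
  exact mul_le_mul (by linarith [min_le_left s t]) (by linarith [min_le_right s t])
    (by positivity) (by positivity)

lemma gammaRatioFactor_eq_one_sub (hs : 0 < s) (ht : 0 < t) (k : ℕ) :
    gammaRatioFactor s t k = 1 - (s - 1) * (t - 1) / ((s + k) * (t + k)) := by
  have : (0 : ℝ) < (s + k) * (t + k) := by positivity
  rw [gammaRatioFactor, eq_sub_iff_add_eq, ← add_div, div_eq_one_iff_eq this.ne']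
  ring

lemma multipliable_gammaRatioFactor (hs : 0 < s) (ht : 0 < t) :
    Multipliable (gammaRatioFactor s t) := by
  convert Real.multipliable_one_add_of_summable
    ((summable_one_div_add_mul_add hs ht).mul_left (-((s - 1) * (t - 1)))) using 2 with k
  rw [gammaRatioFactor_eq_one_sub hs ht]
  ring

lemma prod_range_gammaRatioFactor (m : ℕ) :
    ∏ k ∈ range m, gammaRatioFactor s t k =
      m ! * (∏ k ∈ range m, (s + t - 1 + k)) /
        ((∏ k ∈ range m, (s + k)) * ∏ k ∈ range m, (t + k)) := by
  simp only [gammaRatioFactor, prod_div_distrib, prod_mul_distrib]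
  rw [← prod_range_add_one_eq_factorial, Nat.cast_prod]
  push_cast
  ring

lemma GammaSeq_mul_GammaSeq_div_GammaSeq (hs : 0 < s) (ht : 0 < t) (hst : 0 < s + t - 1)
    {n : ℕ} (hn : n ≠ 0) :
    GammaSeq s n * GammaSeq t n / GammaSeq (s + t - 1) n =
      n / (n + 1) * ∏ k ∈ range (n + 1), gammaRatioFactor s t k := by
  have hn' : (0 : ℝ) < n := by positivity
  have hpow : (n : ℝ) ^ s * (n : ℝ) ^ t = (n : ℝ) ^ (s + t - 1) * n := by
    rw [← rpow_add hn', ← rpow_add_one hn'.ne']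
    ring_nf
  have hprod : ∀ u : ℝ, 0 < u → ∏ j ∈ range (n + 1), (u + j) ≠ 0 :=
    fun u hu => (prod_pos fun j _ => by positivity).ne'
  rw [prod_range_gammaRatioFactor]
  simp only [GammaSeq]
  field_simp [hprod s hs, hprod t ht, hprod _ hst]
  rw [Nat.factorial_succ]
  push_cast
  linear_combination ((n ! : ℝ) * (n + 1)) * hpow

lemma hasProd_gammaRatioFactor (hs : 0 < s) (ht : 0 < t) (hst : 0 < s + t - 1) :
    HasProd (gammaRatioFactor s t) (Gamma s * Gamma t / Gamma (s + t - 1)) := by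
  rw [(multipliable_gammaRatioFactor hs ht).hasProd_iff_tendsto_nat,
    ← tendsto_add_atTop_iff_nat 1]
  have hratio := ((GammaSeq_tendsto_Gamma s).mul (GammaSeq_tendsto_Gamma t)).div
    (GammaSeq_tendsto_Gamma (s + t - 1)) (Gamma_pos_of_pos hst).ne'
  have hlim := hratio.div (tendsto_natCast_div_add_atTop (1 : ℝ)) one_ne_zero
  rw [div_one] at hlim
  refine hlim.congr' ?_
  filter_upwards [eventually_ne_atTop 0] with n hn
  simp only [Pi.div_apply]
  rw [GammaSeq_mul_GammaSeq_div_GammaSeq hs ht hst hn, mul_div_cancel_left₀]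
  positivity

end

/-- Lemma II.1: for `x > 0` and `a < 1` (with `x + a > 0`),
`Γ(1-a) Γ(x+a) / Γ(x) = ∏_{k=1}^∞ k(k+x-1) / ((k-a)(k+x+a-1))`,
and the infinite product converges. -/
theorem stmt0 (x a : ℝ) (hx : 0 < x) (ha : a < 1) (hxa : 0 < x + a) :
    Multipliable (fun k : ℕ =>
      (((k : ℝ) + 1) * (((k : ℝ) + 1) + x - 1)) /
        ((((k : ℝ) + 1) - a) * (((k : ℝ) + 1) + x + a - 1))) ∧
    Real.Gamma (1 - a) * Real.Gamma (x + a) / Real.Gamma x =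
      ∏' k : ℕ,
        (((k : ℝ) + 1) * (((k : ℝ) + 1) + x - 1)) /
          ((((k : ℝ) + 1) - a) * (((k : ℝ) + 1) + x + a - 1)) := by
  have hfactor : (fun k : ℕ => (((k : ℝ) + 1) * (((k : ℝ) + 1) + x - 1)) /
      ((((k : ℝ) + 1) - a) * (((k : ℝ) + 1) + x + a - 1))) = gammaRatioFactor (1 - a) (x + a) := by
    funext k
    rw [gammaRatioFactor]
    ring
  have hprod := hasProd_gammaRatioFactor (by linarith : 0 < 1 - a) hxa (by linarith)
  rw [show 1 - a + (x + a) - 1 = x by ring] at hprod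
  rw [hfactor]
  exact ⟨hprod.multipliable, hprod.tprod_eq.symm⟩
end

section
/- For all real x > 0 and all a with 0 ≤ a < 1, the infinite product P(x,a) = ∏_{k=1}^{∞} [k(k+x−1)] / [(k−a)(k+x+a−1)] converges (the family of factors is multipliable), P(x,a) ≥ 0, and log P(x,a) ≤ a(x+a−1)·∑_{k=1}^{∞} 1/[(k−a)(k+x+a−1)], where the series on the right converges. -/
/-! Each factor is `1 + a (x + a - 1) / D k` with `D k = (k + 1 - a) (k + x + a)` of order `k²`,
so the factors minus one are summable and the product converges; `log t ≤ t - 1`, applied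
termwise to the series of logarithms, gives the bound. -/

open Real

theorem summable_one_div_nat_add_mul_nat_add {p q : ℝ} (hp : 0 < p) (hq : 0 < q) :
    Summable fun k : ℕ => 1 / ((k + p) * (k + q)) := by
  set r := min p q
  have hr : 0 < r := lt_min hp hq
  refine ((summable_one_div_nat_add_rpow r 2).mpr one_lt_two).of_nonneg_of_le
    (fun k => by positivity) fun k => ?_
  have hkr : 0 < (k : ℝ) + r := by positivity
  rw [abs_of_pos hkr, rpow_two, sq]
  gcongr
  · exact min_le_left p q
  · exact min_le_right p q

theorem Real.multipliable_of_summable_sub_one {ι : Type*} {f : ι → ℝ}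
    (hs : Summable fun i => f i - 1) : Multipliable f := by
  simpa using Real.multipliable_one_add_of_summable hs

theorem Real.log_tprod_le_tsum_sub_one {ι : Type*} {f : ι → ℝ} (hf : ∀ i, 0 < f i)
    (hs : Summable fun i => f i - 1) : log (∏' i, f i) ≤ ∑' i, (f i - 1) := by
  have hlog : Summable fun i => log (f i) := by
    simpa using Real.summable_log_one_add_of_summable hs
  rw [← rexp_tsum_eq_tprod hf hlog, log_exp]
  exact hlog.tsum_le_tsum (fun i => log_le_sub_one_of_pos (hf i)) hs

/-- Remark II.1(i): for `x > 0` and `0 ≤ a < 1`, the product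
`P(x,a) = ∏_{k=1}^∞ k(k+x-1)/((k-a)(k+x+a-1))` converges, is nonnegative, and
`log P(x,a) ≤ a(x+a-1) ∑_{k=1}^∞ 1/((k-a)(k+x+a-1))`, the series being convergent. -/
theorem stmt1 (x a : ℝ) (hx : 0 < x) (ha0 : 0 ≤ a) (ha1 : a < 1) :
    Multipliable (fun k : ℕ =>
      (((k : ℝ) + 1) * (((k : ℝ) + 1) + x - 1)) /
        ((((k : ℝ) + 1) - a) * (((k : ℝ) + 1) + x + a - 1))) ∧
    0 ≤ ∏' k : ℕ,
        (((k : ℝ) + 1) * (((k : ℝ) + 1) + x - 1)) /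
          ((((k : ℝ) + 1) - a) * (((k : ℝ) + 1) + x + a - 1)) ∧
    Summable (fun k : ℕ =>
      1 / ((((k : ℝ) + 1) - a) * (((k : ℝ) + 1) + x + a - 1))) ∧
    Real.log (∏' k : ℕ,
        (((k : ℝ) + 1) * (((k : ℝ) + 1) + x - 1)) /
          ((((k : ℝ) + 1) - a) * (((k : ℝ) + 1) + x + a - 1))) ≤
      a * (x + a - 1) *
        ∑' k : ℕ, 1 / ((((k : ℝ) + 1) - a) * (((k : ℝ) + 1) + x + a - 1)) := by
  set D : ℕ → ℝ := fun k => (((k : ℝ) + 1) - a) * (((k : ℝ) + 1) + x + a - 1)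
  have hD : ∀ k, 0 < D k := fun k => by
    have : (0 : ℝ) ≤ k := k.cast_nonneg
    exact mul_pos (by linarith) (by linarith)
  have hfactor : ∀ k : ℕ, 0 < ((k : ℝ) + 1) * (((k : ℝ) + 1) + x - 1) / D k := fun k =>
    div_pos (mul_pos (by positivity) (by linarith [k.cast_nonneg (α := ℝ)])) (hD k)
  have hsub : ∀ k : ℕ, ((k : ℝ) + 1) * (((k : ℝ) + 1) + x - 1) / D k - 1 =
      a * (x + a - 1) * (1 / D k) := fun k => by
    field_simp [(hD k).ne']
    ring
  have hsumD : Summable fun k => 1 / D k := by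
    convert summable_one_div_nat_add_mul_nat_add (sub_pos.mpr ha1) (by linarith : 0 < x + a)
      using 3 with k
    ring
  have hsum : Summable fun k : ℕ => ((k : ℝ) + 1) * (((k : ℝ) + 1) + x - 1) / D k - 1 := by
    simpa only [hsub] using hsumD.mul_left (a * (x + a - 1))
  refine ⟨multipliable_of_summable_sub_one hsum, tprod_nonneg fun k => (hfactor k).le, hsumD, ?_⟩
  rw [← tsum_mul_left, ← tsum_congr hsub]
  exact log_tprod_le_tsum_sub_one hfactor hsum
end

section
/- Let n ≥ 1 be an integer and let 1 < p < ∞ with conjugate exponent q satisfying 1/p + 1/q = 1. Then Γ(n/p) = [Γ(1/p) / Γ(1/q)^{n−1}] · ∏_{m=1}^{n−1} P((n−m)/p, 1/p), where P(x,a) = ∏_{k=1}^{∞} [k(k+x−1)] / [(k−a)(k+x+a−1)] and Γ is the real Gamma function. -/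
/-!
Partial products of `P(x, a)` are quotients of Euler's sequences `GammaSeq`, since the powers
`N^(1-a) N^(x+a)` and `N^1 N^x` cancel; Euler's limit formula therefore gives
`P(x, a) = Γ(1-a) Γ(x+a) / Γ(x)`. For `a = 1/p` we have `1 - a = 1/q`, so the `m`-th factor is
`Γ(1/q) Γ((n-m+1)/p) / Γ((n-m)/p)`, and the product over `m` telescopes to
`Γ(1/q)^(n-1) Γ(n/p) / Γ(1/p)`.
-/

/-- `P(x,a) = ∏_{k=1}^∞ k(k+x-1)/((k-a)(k+x+a-1))`. -/
noncomputable def P (x a : ℝ) : ℝ :=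
  ∏' k : ℕ,
    (((k : ℝ) + 1) * (((k : ℝ) + 1) + x - 1)) /
      ((((k : ℝ) + 1) - a) * (((k : ℝ) + 1) + x + a - 1))

open Filter Finset Topology

theorem prod_Ico_div_of_ne_zero {K : Type*} [Field K] {f : ℕ → K} {m n : ℕ} (hmn : m ≤ n)
    (hf : ∀ i ∈ Icc m n, f i ≠ 0) : ∏ i ∈ Ico m n, f (i + 1) / f i = f n / f m := by
  induction n, hmn using Nat.le_induction with
  | base => simp [div_self (hf m (by simp))]
  | succ n hmn ih =>
    have hn : f n ≠ 0 := hf n (mem_Icc.2 ⟨hmn, n.le_succ⟩)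
    rw [prod_Ico_succ_top hmn, ih fun i hi => hf i (Icc_subset_Icc_right n.le_succ hi)]
    field_simp

namespace Real

theorem GammaSeq_mul_GammaSeq_div {s t u v : ℝ} (h : s + t = u + v) {N : ℕ} (hN : N ≠ 0) :
    GammaSeq s N * GammaSeq t N / (GammaSeq u N * GammaSeq v N) =
      ∏ j ∈ range (N + 1), (u + j) * (v + j) / ((s + j) * (t + j)) := by
  have hN' : (0 : ℝ) < N := by positivity
  have hpow : (N : ℝ) ^ s * N.factorial * ((N : ℝ) ^ t * N.factorial) =
      (N : ℝ) ^ u * N.factorial * ((N : ℝ) ^ v * N.factorial) := by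
    rw [mul_mul_mul_comm, ← rpow_add hN', h, rpow_add hN', mul_mul_mul_comm]
  have hne : (N : ℝ) ^ u * N.factorial * ((N : ℝ) ^ v * N.factorial) ≠ 0 := by positivity
  simp only [GammaSeq, prod_div_distrib, prod_mul_distrib]
  rw [div_mul_div_comm, div_mul_div_comm, div_div_div_eq, hpow, mul_comm (_ * _), mul_div_mul_right _ _ hne]

theorem multipliable_ratio_of_add_eq {s t u v : ℝ} (hs : 0 < s) (ht : 0 < t) (h : s + t = u + v) :
    Multipliable fun j : ℕ => (u + j) * (v + j) / ((s + j) * (t + j)) := by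
  have hterm : ∀ j : ℕ, (u + j) * (v + j) / ((s + j) * (t + j)) =
      1 + (u * v - s * t) / ((s + j) * (t + j)) := fun j => by
    field_simp
    linear_combination (j : ℝ) * h.symm
  simp_rw [hterm]
  refine multipliable_one_add_of_summable ?_
  set m := min s t
  have hm : 0 < m := lt_min hs ht
  have hsum : Summable fun j : ℕ => |u * v - s * t| * (1 / |j + m| ^ (2 : ℝ)) :=
    ((summable_one_div_nat_add_rpow m 2).2 one_lt_two).mul_left _
  refine hsum.of_nonneg_of_le (fun _ => norm_nonneg _) fun j => ?_
  have hsq : (j + m) ^ 2 ≤ (s + j) * (t + j) := by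
    rw [sq]
    exact mul_le_mul (by linarith [min_le_left s t]) (by linarith [min_le_right s t])
      (by positivity) (by positivity)
  rw [norm_div, norm_eq_abs, norm_eq_abs, abs_of_pos (by positivity : (0 : ℝ) < (s + j) * (t + j)),
    abs_of_pos (by positivity : (0 : ℝ) < j + m), rpow_two, ← div_eq_mul_one_div]
  gcongr

theorem hasProd_Gamma_ratio {s t u v : ℝ} (hs : 0 < s) (ht : 0 < t) (h : s + t = u + v)
    (hu : Gamma u ≠ 0) (hv : Gamma v ≠ 0) :
    HasProd (fun j : ℕ => (u + j) * (v + j) / ((s + j) * (t + j)))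
      (Gamma s * Gamma t / (Gamma u * Gamma v)) := by
  have hlim := ((GammaSeq_tendsto_Gamma s).mul (GammaSeq_tendsto_Gamma t)).div
    ((GammaSeq_tendsto_Gamma u).mul (GammaSeq_tendsto_Gamma v)) (mul_ne_zero hu hv)
  rw [(multipliable_ratio_of_add_eq hs ht h).hasProd_iff_tendsto_nat,
    ← tendsto_add_atTop_iff_nat 1]
  refine hlim.congr' ?_
  filter_upwards [eventually_ne_atTop 0] with N hN
  exact GammaSeq_mul_GammaSeq_div h hN

end Real

theorem P_eq_Gamma {x a : ℝ} (hx : 0 < x) (ha : a < 1) (hxa : 0 < x + a) :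
    P x a = Real.Gamma (1 - a) * Real.Gamma (x + a) / Real.Gamma x := by
  have hprod := Real.hasProd_Gamma_ratio (sub_pos.2 ha) hxa (by ring : 1 - a + (x + a) = 1 + x)
    (by simp) (Real.Gamma_pos_of_pos hx).ne'
  rw [Real.Gamma_one, one_mul] at hprod
  rw [P, ← hprod.tprod_eq]
  exact tprod_congr fun k => by ring_nf

/-- Equation (3): for an integer `n ≥ 1` and conjugate exponents `p, q`,
`Γ(n/p) = Γ(1/p)/Γ(1/q)^(n-1) · ∏_{m=1}^{n-1} P((n-m)/p, 1/p)`. -/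
theorem stmt2 (n : ℕ) (hn : 1 ≤ n) (p q : ℝ) (hp : 1 < p) (hpq : 1 / p + 1 / q = 1) :
    Real.Gamma ((n : ℝ) / p) =
      Real.Gamma (1 / p) / (Real.Gamma (1 / q)) ^ (n - 1) *
        ∏ m ∈ Finset.Icc 1 (n - 1), P (((n : ℝ) - (m : ℝ)) / p) (1 / p) := by
  have hp0 : 0 < p := by linarith
  have ha : 1 / p < 1 := (div_lt_one hp0).2 hp
  have hq : 1 - 1 / p = 1 / q := by linarith
  set g : ℕ → ℝ := fun m => (Real.Gamma (((n : ℝ) + 1 - m) / p))⁻¹ with hg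
  have hg_ne : ∀ m ∈ Icc 1 n, g m ≠ 0 := fun m hm => by
    have : (m : ℝ) ≤ n := by exact_mod_cast (mem_Icc.1 hm).2
    exact inv_ne_zero (Real.Gamma_pos_of_pos (by apply div_pos <;> linarith)).ne'
  have hstep : ∀ m ∈ Icc 1 (n - 1),
      P (((n : ℝ) - m) / p) (1 / p) = Real.Gamma (1 / q) * (g (m + 1) / g m) := fun m hm => by
    have hmn : (m : ℝ) < n := by exact_mod_cast (by grind : m < n)
    rw [P_eq_Gamma (div_pos (by linarith) hp0) ha (by positivity), hq,
      hg, inv_div_inv, mul_div_assoc]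
    congr 3 <;> push_cast <;> ring
  have hIcc : Icc 1 (n - 1) = Ico 1 n :=
    Icc_sub_one_right_eq_Ico_of_not_isMin (not_isMin_iff_ne_bot.2 (Nat.one_le_iff_ne_zero.1 hn)) 1
  rw [prod_congr rfl hstep, prod_mul_distrib, prod_const, Nat.card_Icc, Nat.add_sub_cancel,
    hIcc, prod_Ico_div_of_ne_zero hn hg_ne, hg]
  have hΓq := Real.Gamma_pos_of_pos (hq ▸ sub_pos.2 ha)
  simp only [Nat.cast_one, add_sub_cancel_right, add_sub_cancel_left]
  field_simp
end

section
/- Let n ≥ 1 be an integer and let 1 < p < ∞ with conjugate exponent q satisfying 1/p + 1/q = 1. Then M(n,p) = 4^n · h(p)^{2n−2} · ∏_{k=1}^{∞} [(k² + k + 1/(pq))^{n−2} · (k² + nk + n²/(pq))] / (k+1)^{2n−2}, where h(p) = π / (pq·sin(π/p)), and the infinite product converges. -/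
/-! With `a = 1/p` and `b = 1/q`, the `k`-th factor is
`((k+a)(k+b))^(n-2) (k+na)(k+nb) / (k+1)^(2n-2)`, and since `a + b = 1` it is exactly the inverse
of the matching combination of the Euler factors `(1+1/k)^x / (1+x/k)` of `Γ(1+x)` at
`x = a, b, na, nb`. So the product is `((Γ(1+a)Γ(1+b))^(n-2) Γ(1+na)Γ(1+nb))⁻¹`, while the
reflection formula gives `Γ(1+a)Γ(1+b) = π a b / sin(π a) = h(p)`. Unconditional convergence is
handled through logarithms: by Bernoulli's inequality each Euler factor stays on one side of `1`,
so the series of its logarithms converges absolutely once its partial sums converge. -/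

open Real Filter Topology Finset

noncomputable def gammaEulerFactor (x : ℝ) (k : ℕ) : ℝ :=
  (1 + 1 / ((k : ℝ) + 1)) ^ x / (1 + x / ((k : ℝ) + 1))

lemma gammaEulerFactor_pos {x : ℝ} (hx : 0 ≤ x) (k : ℕ) : 0 < gammaEulerFactor x k := by
  unfold gammaEulerFactor
  positivity

lemma prod_range_one_add_one_div_succ (N : ℕ) :
    ∏ k ∈ range N, (1 + 1 / ((k : ℝ) + 1)) = N + 1 := by
  induction N with
  | zero => simp
  | succ N ih =>
    rw [prod_range_succ, ih]
    push_cast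
    field_simp

lemma prod_range_gammaEulerFactor {x : ℝ} (hx : 0 ≤ x) {N : ℕ} (hN : N ≠ 0) :
    ∏ k ∈ range N, gammaEulerFactor x k =
      GammaSeq (x + 1) N * (((N : ℝ) + 1) / N) ^ x * ((x + 1 + N) / N) := by
  have hN0 : (0 : ℝ) < N := by positivity
  have hfact : ∏ k ∈ range N, ((k : ℝ) + 1) = (N.factorial : ℝ) := by
    exact_mod_cast prod_range_add_one_eq_factorial N
  have hden : ∏ k ∈ range N, (1 + x / ((k : ℝ) + 1)) =
      (∏ k ∈ range N, (x + 1 + k)) / N.factorial := by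
    rw [← hfact, ← prod_div_distrib]
    refine prod_congr rfl fun k _ => ?_
    field_simp
    ring
  have hprod_pos : 0 < ∏ k ∈ range N, (x + 1 + (k : ℝ)) := prod_pos fun k _ => by positivity
  simp only [gammaEulerFactor]
  rw [prod_div_distrib, finsetProd_rpow _ _ (fun k _ => by positivity),
    prod_range_one_add_one_div_succ, hden, GammaSeq, prod_range_succ,
    rpow_add_one hN0.ne', div_rpow (by positivity) hN0.le]
  field_simp

lemma tendsto_prod_range_gammaEulerFactor {x : ℝ} (hx : 0 ≤ x) :
    Tendsto (fun N ↦ ∏ k ∈ range N, gammaEulerFactor x k) atTop (𝓝 (Gamma (1 + x))) := by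
  have hinv : Tendsto (fun N : ℕ ↦ 1 / (N : ℝ)) atTop (𝓝 0) :=
    tendsto_one_div_atTop_nhds_zero_nat
  have hsucc : Tendsto (fun N : ℕ ↦ (((N : ℝ) + 1) / N) ^ x) atTop (𝓝 1) := by
    have := ((hinv.const_add 1).rpow_const (p := x) (Or.inl (by norm_num)))
    rw [add_zero, one_rpow] at this
    refine this.congr' ?_
    filter_upwards [eventually_ne_atTop 0] with N hN
    field_simp
  have hshift : Tendsto (fun N : ℕ ↦ (x + 1 + N) / N) atTop (𝓝 1) := by
    have := (hinv.const_mul (x + 1)).const_add 1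
    rw [mul_zero, add_zero] at this
    refine this.congr' ?_
    filter_upwards [eventually_ne_atTop 0] with N hN
    field_simp
    ring
  have := ((GammaSeq_tendsto_Gamma (x + 1)).mul hsucc).mul hshift
  rw [mul_one, mul_one] at this
  rw [add_comm 1 x]
  refine this.congr' ?_
  filter_upwards [eventually_ne_atTop 0] with N hN
  exact (prod_range_gammaEulerFactor hx hN).symm

lemma one_le_gammaEulerFactor {x : ℝ} (hx : 1 ≤ x) (k : ℕ) : 1 ≤ gammaEulerFactor x k := by
  have hs : (-1 : ℝ) ≤ 1 / ((k : ℝ) + 1) := neg_one_lt_zero.le.trans (by positivity)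
  rw [gammaEulerFactor, one_le_div (by positivity), div_eq_mul_one_div x]
  exact one_add_mul_self_le_rpow_one_add hs hx

lemma gammaEulerFactor_le_one {x : ℝ} (hx₀ : 0 ≤ x) (hx₁ : x ≤ 1) (k : ℕ) :
    gammaEulerFactor x k ≤ 1 := by
  have hs : (-1 : ℝ) ≤ 1 / ((k : ℝ) + 1) := neg_one_lt_zero.le.trans (by positivity)
  rw [gammaEulerFactor, div_le_one (by positivity), div_eq_mul_one_div x]
  exact rpow_one_add_le_one_add_mul_self hs hx₀ hx₁

lemma hasSum_log_gammaEulerFactor {x : ℝ} (hx : 0 ≤ x) :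
    HasSum (fun k ↦ log (gammaEulerFactor x k)) (log (Gamma (1 + x))) := by
  have hpartial : Tendsto (fun N ↦ ∑ k ∈ range N, log (gammaEulerFactor x k)) atTop
      (𝓝 (log (Gamma (1 + x)))) := by
    simp_rw [← log_prod fun k _ => (gammaEulerFactor_pos hx k).ne']
    exact (tendsto_prod_range_gammaEulerFactor hx).log (Gamma_pos_of_pos (by linarith)).ne'
  rcases le_total 1 x with hx₁ | hx₁
  · exact (hasSum_iff_tendsto_nat_of_nonneg
      (fun k ↦ log_nonneg (one_le_gammaEulerFactor hx₁ k)) _).2 hpartial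
  · have hnonneg (k : ℕ) : 0 ≤ -log (gammaEulerFactor x k) :=
      neg_nonneg.2 (log_nonpos (gammaEulerFactor_pos hx k).le (gammaEulerFactor_le_one hx hx₁ k))
    have hneg := (hasSum_iff_tendsto_nat_of_nonneg hnonneg _).2
      (by simpa only [sum_neg_distrib] using hpartial.neg)
    simpa only [neg_neg] using hneg.neg

lemma log_gammaEulerFactor {x : ℝ} (hx : 0 ≤ x) (k : ℕ) :
    log (gammaEulerFactor x k) =
      x * (log ((k : ℝ) + 1 + 1) - log ((k : ℝ) + 1)) -
        (log ((k : ℝ) + 1 + x) - log ((k : ℝ) + 1)) := by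
  have hm : (0 : ℝ) < (k : ℝ) + 1 := by positivity
  rw [gammaEulerFactor, one_add_div hm.ne', one_add_div hm.ne', div_rpow (by positivity) hm.le,
    log_div (by positivity) (by positivity), log_div (by positivity) (by positivity),
    log_div (by positivity) hm.ne', log_rpow (by positivity), log_rpow hm]
  ring

noncomputable def volumeProductFactor (n : ℕ) (c : ℝ) (k : ℕ) : ℝ :=
  (((k : ℝ) + 1) ^ 2 + ((k : ℝ) + 1) + c) ^ ((n : ℤ) - 2) *
    (((k : ℝ) + 1) ^ 2 + (n : ℝ) * ((k : ℝ) + 1) + (n : ℝ) ^ 2 * c) /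
      (((k : ℝ) + 1) + 1) ^ (2 * (n : ℤ) - 2)

lemma log_volumeProductFactor (n : ℕ) {a b : ℝ} (ha : 0 ≤ a) (hb : 0 ≤ b) (hab : a + b = 1)
    (k : ℕ) :
    log (volumeProductFactor n (a * b) k) =
      -(((n : ℝ) - 2) * (log (gammaEulerFactor a k) + log (gammaEulerFactor b k)) +
        log (gammaEulerFactor (n * a) k) + log (gammaEulerFactor (n * b) k)) := by
  obtain rfl : b = 1 - a := by linarith
  set m : ℝ := (k : ℝ) + 1 with hm_def
  have hquad₁ : m ^ 2 + m + a * (1 - a) = (m + a) * (m + (1 - a)) := by ring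
  have hquad₂ : m ^ 2 + n * m + n ^ 2 * (a * (1 - a)) = (m + n * a) * (m + n * (1 - a)) := by ring
  rw [volumeProductFactor, ← hm_def, hquad₁, hquad₂,
    log_div (by positivity) (by positivity), log_mul (by positivity) (by positivity),
    log_zpow, log_zpow, log_mul (by positivity) (by positivity),
    log_mul (by positivity) (by positivity),
    log_gammaEulerFactor ha, log_gammaEulerFactor hb, log_gammaEulerFactor (by positivity),
    log_gammaEulerFactor (by positivity)]
  push_cast
  ring

lemma hasProd_volumeProductFactor (n : ℕ) {a b : ℝ} (ha : 0 ≤ a) (hb : 0 ≤ b)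
    (hab : a + b = 1) :
    HasProd (volumeProductFactor n (a * b))
      ((Gamma (1 + a) * Gamma (1 + b)) ^ ((n : ℤ) - 2) *
        (Gamma (1 + n * a) * Gamma (1 + n * b)))⁻¹ := by
  have hsum := ((((hasSum_log_gammaEulerFactor ha).add (hasSum_log_gammaEulerFactor hb)).mul_left
    ((n : ℝ) - 2)).add (hasSum_log_gammaEulerFactor (x := n * a) (by positivity))).add
    (hasSum_log_gammaEulerFactor (x := n * b) (by positivity)) |>.neg
  simp_rw [← log_volumeProductFactor n ha hb hab] at hsum
  have hpos (k : ℕ) : 0 < volumeProductFactor n (a * b) k := by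
    unfold volumeProductFactor
    positivity
  convert hasProd_of_hasSum_log hpos hsum using 1
  refine (exp_log (by positivity)).symm.trans (congrArg rexp ?_)
  rw [log_inv, log_mul (by positivity) (by positivity), log_zpow,
    log_mul (by positivity) (by positivity), log_mul (by positivity) (by positivity)]
  push_cast
  ring

lemma Gamma_one_add_mul_Gamma_one_add {a b : ℝ} (ha : a ≠ 0) (hb : b ≠ 0) (hab : a + b = 1) :
    Gamma (1 + a) * Gamma (1 + b) = a * b * (π / sin (π * a)) := by
  obtain rfl : b = 1 - a := by linarith
  rw [add_comm 1 a, add_comm 1, Gamma_add_one ha, Gamma_add_one hb, ← Gamma_mul_Gamma_one_sub a]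
  ring

theorem stmt4_general (n : ℕ) (p q : ℝ) (hp : 1 < p) (hpq : 1 / p + 1 / q = 1) :
    Multipliable (fun k : ℕ =>
      (((k : ℝ) + 1) ^ 2 + ((k : ℝ) + 1) + 1 / (p * q)) ^ ((n : ℤ) - 2) *
        (((k : ℝ) + 1) ^ 2 + (n : ℝ) * ((k : ℝ) + 1) + (n : ℝ) ^ 2 / (p * q)) /
          (((k : ℝ) + 1) + 1) ^ (2 * (n : ℤ) - 2)) ∧
    4 ^ n * (Real.Gamma (1 + 1 / p) * Real.Gamma (1 + 1 / q)) ^ n /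
        (Real.Gamma (1 + (n : ℝ) / p) * Real.Gamma (1 + (n : ℝ) / q)) =
      4 ^ n * (π / (p * q * Real.sin (π / p))) ^ (2 * (n : ℤ) - 2) *
        ∏' k : ℕ,
          (((k : ℝ) + 1) ^ 2 + ((k : ℝ) + 1) + 1 / (p * q)) ^ ((n : ℤ) - 2) *
            (((k : ℝ) + 1) ^ 2 + (n : ℝ) * ((k : ℝ) + 1) + (n : ℝ) ^ 2 / (p * q)) /
              (((k : ℝ) + 1) + 1) ^ (2 * (n : ℤ) - 2) := by
  have ha : 0 < 1 / p := by positivity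
  have hb : 0 < 1 / q := by linarith [(div_lt_one (by positivity)).2 hp]
  have hfactor : (fun k : ℕ =>
      (((k : ℝ) + 1) ^ 2 + ((k : ℝ) + 1) + 1 / (p * q)) ^ ((n : ℤ) - 2) *
        (((k : ℝ) + 1) ^ 2 + (n : ℝ) * ((k : ℝ) + 1) + (n : ℝ) ^ 2 / (p * q)) /
          (((k : ℝ) + 1) + 1) ^ (2 * (n : ℤ) - 2)) =
        volumeProductFactor n (1 / p * (1 / q)) := by
    funext k
    rw [volumeProductFactor, one_div_mul_one_div, mul_one_div]
  have hprod := hasProd_volumeProductFactor n ha.le hb.le hpq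
  have hh : π / (p * q * sin (π / p)) = Gamma (1 + 1 / p) * Gamma (1 + 1 / q) := by
    rw [Gamma_one_add_mul_Gamma_one_add ha.ne' hb.ne' hpq]
    field_simp
  rw [hfactor, hprod.tprod_eq, hh]
  refine ⟨hprod.multipliable, ?_⟩
  simp only [mul_one_div]
  have hΓ : Gamma (1 + 1 / p) * Gamma (1 + 1 / q) ≠ 0 := by positivity
  rw [show 2 * (n : ℤ) - 2 = n + (n - 2) by ring, zpow_add₀ hΓ, zpow_natCast]
  field_simp

/-- Proposition II.1: for an integer `n ≥ 1` and conjugate exponents `p, q`,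
`M(n,p) = 4ⁿ h(p)^(2n-2) ∏_{k=1}^∞ (k²+k+1/(pq))^(n-2) (k²+nk+n²/(pq)) / (k+1)^(2n-2)`,
where `M(n,p) = 4ⁿ (Γ(1+1/p)Γ(1+1/q))ⁿ / (Γ(1+n/p)Γ(1+n/q))` and
`h(p) = π/(pq sin(π/p))`; the infinite product converges. -/
theorem stmt4 (n : ℕ) (hn : 1 ≤ n) (p q : ℝ) (hp : 1 < p) (hpq : 1 / p + 1 / q = 1) :
    Multipliable (fun k : ℕ =>
      (((k : ℝ) + 1) ^ 2 + ((k : ℝ) + 1) + 1 / (p * q)) ^ ((n : ℤ) - 2) *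
        (((k : ℝ) + 1) ^ 2 + (n : ℝ) * ((k : ℝ) + 1) + (n : ℝ) ^ 2 / (p * q)) /
          (((k : ℝ) + 1) + 1) ^ (2 * (n : ℤ) - 2)) ∧
    4 ^ n * (Real.Gamma (1 + 1 / p) * Real.Gamma (1 + 1 / q)) ^ n /
        (Real.Gamma (1 + (n : ℝ) / p) * Real.Gamma (1 + (n : ℝ) / q)) =
      4 ^ n * (π / (p * q * Real.sin (π / p))) ^ (2 * (n : ℤ) - 2) *
        ∏' k : ℕ,
          (((k : ℝ) + 1) ^ 2 + ((k : ℝ) + 1) + 1 / (p * q)) ^ ((n : ℤ) - 2) *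
            (((k : ℝ) + 1) ^ 2 + (n : ℝ) * ((k : ℝ) + 1) + (n : ℝ) ^ 2 / (p * q)) /
              (((k : ℝ) + 1) + 1) ^ (2 * (n : ℤ) - 2) :=
  stmt4_general n p q hp hpq
end

section
/- Let n ≥ 2 be an integer. The function p ↦ M(n,p) is strictly monotone increasing on the interval (1, 2]: for all real t, p with 1 < t < p ≤ 2 one has M(n,t) < M(n,p). -/
/-!
Put `u = 1/p - 1/2 ∈ [0, 1/2)`. Then `log (M n p / 4ⁿ)` is
`n (log Γ(3/2 + u) + log Γ(3/2 - u)) - (log Γ(1 + n/2 + nu) + log Γ(1 + n/2 - nu))`, and for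
`u' < u` Gauss's product formula writes its increment from `u'` to `u` as the limit of
`∑_{j ≤ m} (n g(j + 1) - g((j + 1)/n))`, with `g x = log (((x + 1/2)² - u'²) / ((x + 1/2)² - u²))`
positive, strictly decreasing and `O(1/x²)`. Grouping the points `(j + 1)/n` into blocks of `n`,
the `k`-th block lying left of `k + 1`, bounds that sum by `g 1 - g (1/n) + O(1/m)`, so the
increment is negative.
-/

open Real Filter Finset Topology

/-- `M(n,p) = 4ⁿ (Γ(1+1/p)Γ(1+1/q))ⁿ / (Γ(1+n/p)Γ(1+n/q))` where `q = p/(p-1)`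
is the Hölder conjugate exponent of `p`. -/
noncomputable def M (n : ℕ) (p : ℝ) : ℝ :=
  4 ^ n * (Real.Gamma (1 + 1 / p) * Real.Gamma (1 + 1 / (p / (p - 1)))) ^ n /
    (Real.Gamma (1 + (n : ℝ) / p) * Real.Gamma (1 + (n : ℝ) / (p / (p - 1))))

theorem sum_range_mul_eq_sum_sum {β : Type*} [AddCommMonoid β] (f : ℕ → β) (n N : ℕ) :
    ∑ j ∈ range (n * N), f j = ∑ k ∈ range N, ∑ i ∈ range n, f (n * k + i) := by
  induction N with
  | zero => simp
  | succ N ih => rw [Nat.mul_succ, sum_range_add, sum_range_succ, ih]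

section RiemannSum

variable {g : ℝ → ℝ} {n : ℕ}

lemma AntitoneOn.sub_le_sum_range_mul_sub (hg : AntitoneOn g (Set.Ioi 0)) (hn : 0 < n) {N : ℕ}
    (hN : 0 < N) :
    g (1 / n) - g 1 ≤ ∑ j ∈ range (n * N), g ((j + 1) / n) - n * ∑ k ∈ range N, g (k + 1) := by
  have hn' : (0 : ℝ) < n := by exact_mod_cast hn
  set D : ℕ → ℕ → ℝ := fun k i => g (((n * k + i : ℕ) + 1) / n) - g (k + 1)
  have hblock : ∀ k, ∀ i ∈ range n, 0 ≤ D k i := by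
    intro k i hi
    have hi : (i : ℝ) + 1 ≤ n := by exact_mod_cast mem_range.1 hi
    refine sub_nonneg.2 (hg (Set.mem_Ioi.2 (by positivity)) (Set.mem_Ioi.2 (by positivity)) ?_)
    rw [div_le_iff₀ hn']
    push_cast
    nlinarith
  calc g (1 / n) - g 1 = D 0 0 := by simp [D]
    _ ≤ ∑ i ∈ range n, D 0 i := single_le_sum (hblock 0) (mem_range.2 hn)
    _ ≤ ∑ k ∈ range N, ∑ i ∈ range n, D k i :=
        single_le_sum (f := fun k => ∑ i ∈ range n, D k i) (fun k _ => sum_nonneg (hblock k))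
          (mem_range.2 hN)
    _ = _ := by
        simp only [D, sum_sub_distrib, sum_const, card_range, nsmul_eq_mul, ← mul_sum,
          sum_range_mul_eq_sum_sum (fun j : ℕ => g ((j + 1) / n))]

lemma sum_Ico_le_of_le_div_sq {C : ℝ} (hC : 0 ≤ C) (hdecay : ∀ x > 0, g x ≤ C / x ^ 2)
    (hn : 0 < n) (m : ℕ) :
    ∑ j ∈ Ico (m + 1) (n * (m + 1)), g ((j + 1) / n) ≤ C * n ^ 3 / (m + 1) := by
  have hn' : (0 : ℝ) < n := by exact_mod_cast hn
  have hterm : ∀ j ∈ Ico (m + 1) (n * (m + 1)), g ((j + 1) / n) ≤ C * n ^ 2 / (m + 1) ^ 2 := by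
    intro j hj
    have hj := (mem_Ico.1 hj).1
    calc g ((j + 1) / n) ≤ C / ((j + 1) / n) ^ 2 := hdecay _ (by positivity)
      _ = C * n ^ 2 / (j + 1) ^ 2 := by field_simp
      _ ≤ C * n ^ 2 / (m + 1) ^ 2 := by gcongr; omega
  have hcard : ((Ico (m + 1) (n * (m + 1))).card : ℝ) ≤ n * (m + 1) := by
    rw [Nat.card_Ico]
    exact_mod_cast Nat.sub_le _ _
  calc ∑ j ∈ Ico (m + 1) (n * (m + 1)), g ((j + 1) / n)
      ≤ (Ico (m + 1) (n * (m + 1))).card * (C * n ^ 2 / (m + 1) ^ 2) := by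
        simpa using sum_le_card_nsmul _ _ _ hterm
    _ ≤ n * (m + 1) * (C * n ^ 2 / (m + 1) ^ 2) := by gcongr
    _ = C * n ^ 3 / (m + 1) := by field_simp

lemma AntitoneOn.le_sub_of_tendsto_sum {C L : ℝ}
    (hg : AntitoneOn g (Set.Ioi 0)) (hC : 0 ≤ C) (hdecay : ∀ x > 0, g x ≤ C / x ^ 2) (hn : 0 < n)
    (hL : Tendsto (fun m : ℕ => ∑ j ∈ range (m + 1), (n * g (j + 1) - g ((j + 1) / n))) atTop
      (𝓝 L)) :
    L ≤ g 1 - g (1 / n) := by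
  have hbound : ∀ m : ℕ, ∑ j ∈ range (m + 1), (n * g (j + 1) - g ((j + 1) / n))
      ≤ g 1 - g (1 / n) + C * n ^ 3 / (m + 1) := by
    intro m
    have hmain := hg.sub_le_sum_range_mul_sub hn m.succ_pos
    have htail := sum_Ico_le_of_le_div_sq hC hdecay hn m
    rw [← sum_range_add_sum_Ico _ (Nat.le_mul_of_pos_left _ hn)] at hmain
    rw [sum_sub_distrib, ← mul_sum]
    linarith
  have hlim : Tendsto (fun m : ℕ => g 1 - g (1 / n) + C * n ^ 3 / (m + 1)) atTop
      (𝓝 (g 1 - g (1 / n))) := by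
    simpa only [mul_one_div, mul_zero, add_zero] using
      tendsto_const_nhds.add (tendsto_one_div_add_atTop_nhds_zero_nat.const_mul (C * n ^ 3))
  exact le_of_tendsto_of_tendsto' hL hlim hbound

end RiemannSum

noncomputable def logFactorRatio (u' u x : ℝ) : ℝ :=
  log (((x + 1 / 2) ^ 2 - u' ^ 2) / ((x + 1 / 2) ^ 2 - u ^ 2))

section logFactorRatio

variable {u' u : ℝ} (h : u' ^ 2 < u ^ 2) (hu : u ^ 2 < 1 / 4)
include h hu

lemma logFactorRatio_eq {x : ℝ} (hx : 0 < x) :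
    logFactorRatio u' u x = log (1 + (u ^ 2 - u' ^ 2) / ((x + 1 / 2) ^ 2 - u ^ 2)) := by
  have hA : 0 < (x + 1 / 2) ^ 2 - u ^ 2 := by nlinarith
  rw [logFactorRatio, one_add_div hA.ne']
  ring_nf

lemma logFactorRatio_strictAntiOn : StrictAntiOn (logFactorRatio u' u) (Set.Ioi 0) := by
  rintro x (hx : 0 < x) y - hxy
  have hAx : 0 < (x + 1 / 2) ^ 2 - u ^ 2 := by nlinarith
  have hAxy : (x + 1 / 2) ^ 2 - u ^ 2 < (y + 1 / 2) ^ 2 - u ^ 2 := by nlinarith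
  have hq : 0 ≤ (u ^ 2 - u' ^ 2) / ((y + 1 / 2) ^ 2 - u ^ 2) :=
    div_nonneg (by linarith) (by linarith)
  rw [logFactorRatio_eq h hu hx, logFactorRatio_eq h hu (hx.trans hxy)]
  gcongr

lemma logFactorRatio_le {x : ℝ} (hx : 0 < x) :
    logFactorRatio u' u x ≤ (u ^ 2 - u' ^ 2) / x ^ 2 := by
  have hA : x ^ 2 ≤ (x + 1 / 2) ^ 2 - u ^ 2 := by nlinarith
  have hδ : 0 ≤ u ^ 2 - u' ^ 2 := by linarith
  have hq : 0 ≤ (u ^ 2 - u' ^ 2) / ((x + 1 / 2) ^ 2 - u ^ 2) :=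
    div_nonneg hδ ((sq_nonneg x).trans hA)
  rw [logFactorRatio_eq h hu hx]
  calc _ ≤ (u ^ 2 - u' ^ 2) / ((x + 1 / 2) ^ 2 - u ^ 2) := by
        linarith [log_le_sub_one_of_pos (x := 1 + (u ^ 2 - u' ^ 2) / ((x + 1 / 2) ^ 2 - u ^ 2))
          (by linarith)]
    _ ≤ (u ^ 2 - u' ^ 2) / x ^ 2 := by gcongr

end logFactorRatio

section GaussProduct

open Real.BohrMollerup
open scoped Nat

lemma logGammaSeq_add_add_logGammaSeq_sub {c v : ℝ} (hv : |v| < c) (m : ℕ) :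
    logGammaSeq (c + v) m + logGammaSeq (c - v) m
      = 2 * c * log m + 2 * log m ! - ∑ j ∈ range (m + 1), log ((c + j) ^ 2 - v ^ 2) := by
  have hfactor : ∀ j : ℕ, log (c + v + j) + log (c - v + j) = log ((c + j) ^ 2 - v ^ 2) := by
    intro j
    obtain ⟨h₁, h₂⟩ := abs_lt.1 hv
    have hj : (0 : ℝ) ≤ j := j.cast_nonneg
    rw [← log_mul (by linarith) (by linarith)]
    ring_nf
  simp only [logGammaSeq, ← hfactor, sum_add_distrib]
  ring

lemma tendsto_sum_log_div_sq_sub_sq {c v w : ℝ} (hv : |v| < c) (hw : |w| < c) :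
    Tendsto (fun m : ℕ => ∑ j ∈ range (m + 1), log (((c + j) ^ 2 - w ^ 2) / ((c + j) ^ 2 - v ^ 2)))
      atTop (𝓝 (log (Gamma (c + v)) + log (Gamma (c - v))
        - (log (Gamma (c + w)) + log (Gamma (c - w))))) := by
  have hpos : ∀ {v : ℝ}, |v| < c → ∀ j : ℕ, 0 < (c + j) ^ 2 - v ^ 2 := by
    intro v hv j
    obtain ⟨h₁, h₂⟩ := abs_lt.1 hv
    have hj : (0 : ℝ) ≤ j := j.cast_nonneg
    nlinarith
  obtain ⟨hv₁, hv₂⟩ := abs_lt.1 hv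
  obtain ⟨hw₁, hw₂⟩ := abs_lt.1 hw
  refine (((tendsto_log_gamma (by linarith)).add (tendsto_log_gamma (by linarith))).sub
    ((tendsto_log_gamma (by linarith)).add (tendsto_log_gamma (by linarith)))).congr fun m => ?_
  simp only [logGammaSeq_add_add_logGammaSeq_sub hv,
    logGammaSeq_add_add_logGammaSeq_sub hw, log_div (hpos hw _).ne' (hpos hv _).ne',
    sum_sub_distrib]
  ring

end GaussProduct

noncomputable def logMShifted (n : ℕ) (u : ℝ) : ℝ :=
  n * (log (Gamma (3 / 2 + u)) + log (Gamma (3 / 2 - u)))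
    - (log (Gamma (1 + n / 2 + n * u)) + log (Gamma (1 + n / 2 - n * u)))

lemma M_eq_exp_logMShifted (n : ℕ) {p : ℝ} (hp : 1 < p) :
    M n p = 4 ^ n * exp (logMShifted n (1 / p - 1 / 2)) := by
  have hp₀ : 0 < p := by linarith
  have hp₁ : p - 1 ≠ 0 := by linarith
  have e₂ : 1 + 1 / (p / (p - 1)) = 3 / 2 - (1 / p - 1 / 2) := by field_simp; ring
  have e₄ : 1 + (n : ℝ) / (p / (p - 1)) = 1 + n / 2 - n * (1 / p - 1 / 2) := by field_simp; ring
  rw [M, show 1 + 1 / p = 3 / 2 + (1 / p - 1 / 2) by ring, e₂,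
    show 1 + (n : ℝ) / p = 1 + n / 2 + n * (1 / p - 1 / 2) by ring, e₄]
  have hu₀ : 0 < 1 / p := by positivity
  have hu₁ : 1 / p < 1 := (div_lt_one hp₀).2 hp
  obtain ⟨hlo, hhi⟩ : -(1 / 2) < 1 / p - 1 / 2 ∧ 1 / p - 1 / 2 < 1 / 2 := ⟨by linarith, by linarith⟩
  set u := 1 / p - 1 / 2
  have hn₀ : (0 : ℝ) ≤ n := n.cast_nonneg
  have hΓ : ∀ {x : ℝ}, 0 < x → exp (log (Gamma x)) = Gamma x :=
    fun hx => exp_log (Gamma_pos_of_pos hx)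
  rw [logMShifted, exp_sub, exp_nat_mul, exp_add, exp_add, hΓ (by linarith), hΓ (by linarith),
    hΓ (by nlinarith), hΓ (by nlinarith), mul_div_assoc]

lemma tendsto_sum_logFactorRatio {n : ℕ} (hn : 0 < n) {u' u : ℝ} (h : u' ^ 2 < u ^ 2)
    (hu : u ^ 2 < 1 / 4) :
    Tendsto (fun m : ℕ => ∑ j ∈ range (m + 1),
        (n * logFactorRatio u' u (j + 1) - logFactorRatio u' u ((j + 1) / n))) atTop
      (𝓝 (logMShifted n u - logMShifted n u')) := by
  have hn' : (0 : ℝ) < n := by exact_mod_cast hn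
  have habs : ∀ {v : ℝ}, v ^ 2 < 1 / 4 → |v| < 1 / 2 := fun hv =>
    abs_lt_of_sq_lt_sq (by linarith) (by norm_num)
  have hscaled : ∀ {v : ℝ}, v ^ 2 < 1 / 4 → |n * v| < 1 + n / 2 := by
    intro v hv
    rw [abs_mul, Nat.abs_cast]
    nlinarith [habs hv]
  have hscale : ∀ (j : ℕ) (v : ℝ),
      (1 + n / 2 + j) ^ 2 - (n * v) ^ 2 = n ^ 2 * (((j + 1) / n + 1 / 2) ^ 2 - v ^ 2) := by
    intro j v
    field_simp
    ring
  have hsmall := tendsto_sum_log_div_sq_sub_sq (c := 3 / 2) (habs hu |>.trans (by norm_num))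
    (habs (h.trans hu) |>.trans (by norm_num))
  have hlarge := tendsto_sum_log_div_sq_sub_sq (hscaled hu) (hscaled (h.trans hu))
  convert (hsmall.const_mul (n : ℝ)).sub hlarge using 1
  · ext m
    rw [mul_sum, ← sum_sub_distrib]
    refine sum_congr rfl fun j _ => ?_
    rw [hscale, hscale, mul_div_mul_left _ _ (by positivity), logFactorRatio, logFactorRatio]
    ring_nf
  · rw [logMShifted, logMShifted]
    congr 1
    ring

lemma logMShifted_strictAntiOn {n : ℕ} (hn : 2 ≤ n) :
    StrictAntiOn (logMShifted n) (Set.Ico 0 (1 / 2)) := by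
  rintro u' ⟨hu'₀, -⟩ u ⟨-, hu₁⟩ hlt
  have h : u' ^ 2 < u ^ 2 := by nlinarith
  have hu : u ^ 2 < 1 / 4 := by nlinarith
  have hanti := logFactorRatio_strictAntiOn h hu
  have hle := hanti.antitoneOn.le_sub_of_tendsto_sum (sub_nonneg.2 h.le)
    (fun _ hx => logFactorRatio_le h hu hx) (by omega : 0 < n)
    (tendsto_sum_logFactorRatio (by omega) h hu)
  have hn' : (1 : ℝ) < n := by exact_mod_cast hn
  have hgap : logFactorRatio u' u 1 < logFactorRatio u' u (1 / n) :=
    hanti (Set.mem_Ioi.2 (by positivity)) (Set.mem_Ioi.2 one_pos)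
      ((div_lt_one (by linarith)).2 hn')
  linarith

/-- For `n ≥ 2`, `p ↦ M(n,p)` is strictly increasing on `(1, 2]`. -/
theorem stmt5 (n : ℕ) (hn : 2 ≤ n) :
    ∀ t p : ℝ, 1 < t → t < p → p ≤ 2 → M n t < M n p := by
  intro t p ht htp hp
  have hmem : ∀ {s : ℝ}, 1 < s → s ≤ 2 → 1 / s - 1 / 2 ∈ Set.Ico 0 (1 / 2) := by
    intro s hs₁ hs₂
    have : 1 / s < 1 := (div_lt_one (by linarith)).2 hs₁
    have : 1 / 2 ≤ 1 / s := one_div_le_one_div_of_le (by linarith) hs₂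
    constructor <;> linarith
  rw [M_eq_exp_logMShifted n ht, M_eq_exp_logMShifted n (ht.trans htp)]
  gcongr
  refine logMShifted_strictAntiOn hn (hmem (ht.trans htp) hp) (hmem ht (htp.le.trans hp)) ?_
  gcongr
end

section
/- For every integer n ≥ 1 and every real p with 1 < p < ∞, one has M(n,p) ≤ M(n,2) = π^n / Γ(1 + n/2)², and if n ≥ 2 then equality holds if and only if p = 2. -/
/-!
Put `s = 1/p - 1/2`, so that `|s| < 1/2`, and `D(c, s) = log Γ(c+s) + log Γ(c-s) - 2 log Γ(c)`.
Then `M(n,p) = M(n,2) · exp (n D(3/2, s) - D(1 + n/2, n s))`, so it suffices that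
`n D(3/2, s) ≤ D(1 + n/2, n s)`, strictly when `n ≥ 2` and `s ≠ 0`.

By Euler's product for Γ, `D(c, s) = ∑ₘ -log (1 - (s/(c+m))²)`, a series of nonnegative terms
that decrease in `c + m`. Group the terms of `D(1 + n/2, n s)` in blocks of `n`: the term of index
`i n + r` (`r < n`) is `-log (1 - (s/x)²)` with `x = (1 + n/2 + i n + r)/n ≤ i + 3/2`, hence at least
the `i`-th term of `D(3/2, s)`, and strictly more for `i = r = 0` once `n ≥ 2` and `s ≠ 0`.
-/

open Real

open Filter Topology Finset

theorem Real.neg_log_one_sub_sq_le {x y : ℝ} (hxy : |x| ≤ |y|) (hy : |y| < 1) :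
    -log (1 - x ^ 2) ≤ -log (1 - y ^ 2) := by
  rw [← sq_abs x, ← sq_abs y]
  have := abs_nonneg x
  exact neg_le_neg (log_le_log (by nlinarith) (by nlinarith))

theorem Real.neg_log_one_sub_sq_lt {x y : ℝ} (hxy : |x| < |y|) (hy : |y| < 1) :
    -log (1 - x ^ 2) < -log (1 - y ^ 2) := by
  rw [← sq_abs x, ← sq_abs y]
  have := abs_nonneg x
  exact neg_lt_neg (log_lt_log (by nlinarith) (by nlinarith))

theorem Real.neg_log_one_sub_sq_nonneg {x : ℝ} (hx : |x| < 1) : 0 ≤ -log (1 - x ^ 2) := by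
  simpa using neg_log_one_sub_sq_le (abs_zero.trans_le (abs_nonneg x)) hx

theorem HasSum.sum_range_mul_add {α : Type*} [AddCommMonoid α] [TopologicalSpace α]
    [ContinuousAdd α] [RegularSpace α] {f : ℕ → α} {a : α} (hf : HasSum f a) (n : ℕ) [NeZero n] :
    HasSum (fun i ↦ ∑ r ∈ range n, f (i * n + r)) a := by
  refine ((Nat.divModEquiv n).symm.hasSum_iff.mpr hf).prod_fiberwise fun i ↦ ?_
  rw [← Fin.sum_univ_eq_sum_range (fun r ↦ f (i * n + r))]
  exact hasSum_fintype _

noncomputable def logGammaDefect (c s : ℝ) : ℝ :=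
  log (Gamma (c + s)) + log (Gamma (c - s)) - 2 * log (Gamma c)

/-- Partial sums are a combination of Gauss's `BohrMollerup.logGammaSeq`, in which the terms
`x log N + log N!` cancel. -/
theorem hasSum_logGammaDefect {c s : ℝ} (hs : |s| < c) :
    HasSum (fun m : ℕ ↦ -log (1 - (s / (c + m)) ^ 2)) (logGammaDefect c s) := by
  have hcm : ∀ m : ℕ, |s| < c + m := fun m ↦ hs.trans_le (le_add_of_nonneg_right m.cast_nonneg)
  have hterm : ∀ m : ℕ, -log (1 - (s / (c + m)) ^ 2)
      = 2 * log (c + m) - log (c + s + m) - log (c - s + m) := by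
    intro m
    obtain ⟨h₁, h₂⟩ := abs_lt.mp (hcm m)
    have hc : 0 < c + m := by linarith
    rw [show 1 - (s / (c + m)) ^ 2 = (c + s + m) * (c - s + m) / (c + m) ^ 2 by
      field_simp; ring, log_div (by nlinarith) (by positivity),
      log_mul (by linarith) (by linarith), log_pow]
    push_cast
    ring
  have hpartial : ∀ N : ℕ, ∑ m ∈ range (N + 1), -log (1 - (s / (c + m)) ^ 2)
      = BohrMollerup.logGammaSeq (c + s) N + BohrMollerup.logGammaSeq (c - s) N
        - 2 * BohrMollerup.logGammaSeq c N := by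
    intro N
    simp only [hterm, BohrMollerup.logGammaSeq, sum_sub_distrib, ← mul_sum]
    ring
  have hratio : ∀ m : ℕ, |s / (c + m)| < 1 := fun m ↦ by
    have hc : 0 < c + m := (abs_nonneg s).trans_lt (hcm m)
    rw [abs_div, abs_of_pos hc, div_lt_one hc]
    exact hcm m
  obtain ⟨h₁, h₂⟩ := abs_lt.mp hs
  have hlim := ((BohrMollerup.tendsto_log_gamma (by linarith : 0 < c + s)).add
    (BohrMollerup.tendsto_log_gamma (by linarith : 0 < c - s))).sub
    ((BohrMollerup.tendsto_log_gamma (by linarith : 0 < c)).const_mul 2)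
  rw [hasSum_iff_tendsto_nat_of_nonneg (fun m ↦ neg_log_one_sub_sq_nonneg (hratio m)),
    ← tendsto_add_atTop_iff_nat 1]
  simpa only [hpartial, logGammaDefect] using hlim

theorem Gamma_add_mul_Gamma_sub {c s : ℝ} (hs : |s| < c) :
    Gamma (c + s) * Gamma (c - s) = Gamma c ^ 2 * exp (logGammaDefect c s) := by
  obtain ⟨h₁, h₂⟩ := abs_lt.mp hs
  have hc := (Gamma_pos_of_pos (by linarith : 0 < c)).ne'
  rw [logGammaDefect, exp_sub, exp_add, exp_log (Gamma_pos_of_pos (by linarith)),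
    exp_log (Gamma_pos_of_pos (by linarith)), mul_comm 2, exp_mul,
    exp_log (Gamma_pos_of_pos (by linarith))]
  field_simp
  norm_cast

section Blocks

variable {n : ℕ} {s : ℝ}

theorem abs_div_three_halves_add_le {i r : ℕ} (hr : r < n) :
    |s / (3 / 2 + i)| ≤ |n * s / (1 + n / 2 + (i * n + r : ℕ))| := by
  have hr' : (r : ℝ) + 1 ≤ n := by exact_mod_cast hr
  rw [abs_div, abs_div, abs_mul, Nat.abs_cast, abs_of_pos (by positivity : (0 : ℝ) < 3 / 2 + i),
    abs_of_pos (by positivity : (0 : ℝ) < 1 + n / 2 + (i * n + r : ℕ)),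
    div_le_div_iff₀ (by positivity) (by positivity)]
  push_cast
  nlinarith [abs_nonneg s]

theorem abs_div_three_halves_lt (hn : 2 ≤ n) (hs : s ≠ 0) :
    |s / (3 / 2)| < |n * s / (1 + n / 2)| := by
  have hn' : (2 : ℝ) ≤ n := by exact_mod_cast hn
  rw [abs_div s (3 / 2), abs_div (n * s), abs_mul, Nat.abs_cast,
    abs_of_pos (by positivity : (0 : ℝ) < 3 / 2), abs_of_pos (by positivity : (0 : ℝ) < 1 + n / 2),
    div_lt_div_iff₀ (by positivity) (by positivity)]
  nlinarith [abs_pos.mpr hs]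

theorem abs_mul_div_lt_one (hs : |s| < 1 / 2) (m : ℕ) : |n * s / (1 + n / 2 + m)| < 1 := by
  have hpos : (0 : ℝ) < 1 + n / 2 + m := by positivity
  rw [abs_div, abs_mul, Nat.abs_cast, abs_of_pos hpos, div_lt_one hpos]
  nlinarith [abs_nonneg s, (n.cast_nonneg : (0 : ℝ) ≤ n), (m.cast_nonneg : (0 : ℝ) ≤ m)]

theorem hasSum_logGammaDefect_blocks [NeZero n] (hs : |s| < 1 / 2) :
    HasSum (fun i : ℕ ↦ ∑ r ∈ range n, -log (1 - (n * s / (1 + n / 2 + (i * n + r : ℕ))) ^ 2))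
      (logGammaDefect (1 + n / 2) (n * s)) := by
  refine (hasSum_logGammaDefect ?_).sum_range_mul_add n
  rw [abs_mul, Nat.abs_cast]
  nlinarith [abs_nonneg s, (n.cast_nonneg : (0 : ℝ) ≤ n)]

theorem mul_le_sum_block (hs : |s| < 1 / 2) (i : ℕ) :
    n * -log (1 - (s / (3 / 2 + i)) ^ 2)
      ≤ ∑ r ∈ range n, -log (1 - (n * s / (1 + n / 2 + (i * n + r : ℕ))) ^ 2) := by
  simpa using card_nsmul_le_sum (range n) _ _ fun r hr ↦
    neg_log_one_sub_sq_le (abs_div_three_halves_add_le (mem_range.mp hr)) (abs_mul_div_lt_one hs _)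

theorem mul_lt_sum_block_zero (hn : 2 ≤ n) (hs0 : s ≠ 0) (hs : |s| < 1 / 2) :
    n * -log (1 - (s / (3 / 2 + (0 : ℕ))) ^ 2)
      < ∑ r ∈ range n, -log (1 - (n * s / (1 + n / 2 + (0 * n + r : ℕ))) ^ 2) := by
  calc (n : ℝ) * -log (1 - (s / (3 / 2 + (0 : ℕ))) ^ 2)
      = ∑ _r ∈ range n, -log (1 - (s / (3 / 2 + (0 : ℕ))) ^ 2) := by simp
    _ < _ := by
      refine sum_lt_sum (fun r hr ↦ ?_) ⟨0, mem_range.mpr (by omega), ?_⟩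
      · exact neg_log_one_sub_sq_le (abs_div_three_halves_add_le (mem_range.mp hr))
          (abs_mul_div_lt_one hs _)
      · refine neg_log_one_sub_sq_lt ?_ (abs_mul_div_lt_one hs _)
        simpa using abs_div_three_halves_lt hn hs0

theorem mul_logGammaDefect_le (n : ℕ) (hs : |s| < 1 / 2) :
    n * logGammaDefect (3 / 2) s ≤ logGammaDefect (1 + n / 2) (n * s) := by
  rcases Nat.eq_zero_or_pos n with rfl | hn
  · simp [logGammaDefect]
  have : NeZero n := ⟨hn.ne'⟩
  exact hasSum_le (mul_le_sum_block hs)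
    ((hasSum_logGammaDefect (c := 3 / 2) (by linarith)).mul_left (n : ℝ))
    (hasSum_logGammaDefect_blocks hs)

theorem mul_logGammaDefect_lt (hn : 2 ≤ n) (hs0 : s ≠ 0) (hs : |s| < 1 / 2) :
    n * logGammaDefect (3 / 2) s < logGammaDefect (1 + n / 2) (n * s) := by
  have : NeZero n := ⟨by omega⟩
  exact hasSum_lt (mul_le_sum_block hs) (mul_lt_sum_block_zero hn hs0 hs)
    ((hasSum_logGammaDefect (c := 3 / 2) (by linarith)).mul_left (n : ℝ))
    (hasSum_logGammaDefect_blocks hs)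

end Blocks

theorem Real.Gamma_three_halves_sq : Gamma (3 / 2) ^ 2 = π / 4 := by
  rw [show (3 / 2 : ℝ) = 1 / 2 + 1 by norm_num, Gamma_add_one (by norm_num), Gamma_one_half_eq,
    mul_pow, sq_sqrt pi_pos.le]
  ring

theorem M_eq {n : ℕ} {p : ℝ} (hp : p ≠ 0) :
    M n p = 4 ^ n * (Gamma (3 / 2 + (1 / p - 1 / 2)) * Gamma (3 / 2 - (1 / p - 1 / 2))) ^ n /
      (Gamma (1 + n / 2 + n * (1 / p - 1 / 2)) * Gamma (1 + n / 2 - n * (1 / p - 1 / 2))) := by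
  have hq : 1 / (p / (p - 1)) = 1 - 1 / p := by rw [one_div_div]; field_simp
  rw [M, div_eq_mul_one_div (n : ℝ) (p / (p - 1)), hq]
  ring_nf

theorem M_two (n : ℕ) : M n 2 = π ^ n / Gamma (1 + n / 2) ^ 2 := by
  rw [M_eq two_ne_zero]
  norm_num [← sq, ← mul_pow, Gamma_three_halves_sq, mul_div_cancel₀]

theorem abs_one_div_sub_half_lt {p : ℝ} (hp : 1 < p) : |1 / p - 1 / 2| < 1 / 2 := by
  have h₀ : 0 < 1 / p := by positivity
  have h₁ : 1 / p < 1 := (div_lt_one (by linarith)).mpr hp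
  rw [abs_lt]
  constructor <;> linarith

theorem M_eq_M_two_mul_exp (n : ℕ) {p : ℝ} (hp : 1 < p) :
    M n p = M n 2 * exp (n * logGammaDefect (3 / 2) (1 / p - 1 / 2)
      - logGammaDefect (1 + n / 2) (n * (1 / p - 1 / 2))) := by
  have hs := abs_one_div_sub_half_lt hp
  have hns : |n * (1 / p - 1 / 2)| < 1 + n / 2 := by
    rw [abs_mul, Nat.abs_cast]
    nlinarith [abs_nonneg (1 / p - 1 / 2), (n.cast_nonneg : (0 : ℝ) ≤ n)]
  rw [M_eq (by positivity), Gamma_add_mul_Gamma_sub (by linarith), Gamma_add_mul_Gamma_sub hns,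
    M_two, exp_sub, exp_nat_mul, Gamma_three_halves_sq, mul_pow, div_pow]
  field_simp

theorem M_two_pos (n : ℕ) : 0 < M n 2 := by
  rw [M_two]
  have := Gamma_pos_of_pos (by positivity : (0 : ℝ) < 1 + n / 2)
  positivity

theorem M_le_M_two (n : ℕ) {p : ℝ} (hp : 1 < p) : M n p ≤ M n 2 := by
  rw [M_eq_M_two_mul_exp n hp]
  exact mul_le_of_le_one_right (M_two_pos n).le <| exp_le_one_iff.mpr <| sub_nonpos.mpr <|
    mul_logGammaDefect_le n (abs_one_div_sub_half_lt hp)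

theorem M_lt_M_two {n : ℕ} (hn : 2 ≤ n) {p : ℝ} (hp : 1 < p) (hp2 : p ≠ 2) : M n p < M n 2 := by
  have hs0 : 1 / p - 1 / 2 ≠ 0 := fun h ↦ hp2 <| by simpa [sub_eq_zero] using h
  rw [M_eq_M_two_mul_exp n hp]
  exact mul_lt_of_lt_one_right (M_two_pos n) <| exp_lt_one_iff.mpr <| sub_neg.mpr <|
    mul_logGammaDefect_lt hn hs0 (abs_one_div_sub_half_lt hp)

theorem stmt7_general (n : ℕ) (p : ℝ) (hp : 1 < p) :
    M n p ≤ M n 2 ∧ M n 2 = π ^ n / (Real.Gamma (1 + (n : ℝ) / 2)) ^ 2 ∧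
      (2 ≤ n → (M n p = M n 2 ↔ p = 2)) :=
  ⟨M_le_M_two n hp, M_two n, fun hn ↦
    ⟨fun h ↦ by_contra fun hp2 ↦ (M_lt_M_two hn hp hp2).ne h, fun h ↦ h ▸ rfl⟩⟩

/-- Blaschke–Santaló for `p`-balls: `M(n,p) ≤ M(n,2) = πⁿ/Γ(1+n/2)²`, with
equality iff `p = 2` when `n ≥ 2`. -/
theorem stmt7 (n : ℕ) (hn : 1 ≤ n) (p : ℝ) (hp : 1 < p) :
    M n p ≤ M n 2 ∧ M n 2 = π ^ n / (Real.Gamma (1 + (n : ℝ) / 2)) ^ 2 ∧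
      (2 ≤ n → (M n p = M n 2 ↔ p = 2)) :=
  stmt7_general n p hp
end

section
/- Let n ≥ 1 be an integer, let 1 < p < ∞ with conjugate exponent q satisfying 1/p + 1/q = 1, and let B_p^n = {x ∈ ℝ^n : ∑_{i=1}^n |x_i|^p ≤ 1} and B_q^n = {y ∈ ℝ^n : ∑_{i=1}^n |y_i|^q ≤ 1}. Then the product of Lebesgue volumes satisfies 4^n/n! ≤ vol(B_p^n) · vol(B_q^n). -/
/-!
With `a = 1/p` and `b = 1/q`, the Dirichlet formula `vol(B_pⁿ) = (2Γ(1/p+1))ⁿ/Γ(n/p+1)` turns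
the claim into `Γ(na+1)Γ(nb+1)/Γ(n(a+b)+1) ≤ (Γ(a+1)Γ(b+1)/Γ(a+b+1))ⁿ`, since `a + b = 1`.
Both sides are Euler products `∏_{j≥1} j(j+a+b)/((j+a)(j+b))`. The factor is increasing in `j`
and unchanged when `a`, `b`, `j` are all multiplied by `n`, so the first `nN` factors of the left
product, grouped into `N` blocks of `n`, are bounded blockwise by the first `N` factors of the
right product raised to the `n`-th power.
-/

open MeasureTheory Filter Real Finset
open scoped ENNReal Topology

noncomputable def eulerFactor (a b x : ℝ) : ℝ := x * (x + a + b) / ((x + a) * (x + b))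

section EulerFactor

variable {a b x y : ℝ}

theorem eulerFactor_pos (ha : 0 ≤ a) (hb : 0 ≤ b) (hx : 0 < x) : 0 < eulerFactor a b x := by
  unfold eulerFactor; positivity

theorem eulerFactor_le_eulerFactor (ha : 0 ≤ a) (hb : 0 ≤ b) (hx : 0 < x) (hxy : x ≤ y) :
    eulerFactor a b x ≤ eulerFactor a b y := by
  have h_eq {z : ℝ} (hz : 0 < z) : eulerFactor a b z = 1 - a * b / ((z + a) * (z + b)) := by
    unfold eulerFactor; field_simp; ring
  have hy : 0 < y := hx.trans_le hxy
  rw [h_eq hx, h_eq hy]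
  gcongr

theorem eulerFactor_mul_mul_mul {c : ℝ} (hc : c ≠ 0) :
    eulerFactor (c * a) (c * b) (c * x) = eulerFactor a b x := by
  unfold eulerFactor
  rw [show c * x * (c * x + c * a + c * b) = (c * c) * (x * (x + a + b)) by ring,
    show (c * x + c * a) * (c * x + c * b) = (c * c) * ((x + a) * (x + b)) by ring,
    mul_div_mul_left _ _ (mul_ne_zero hc hc)]

theorem GammaSeq_mul_GammaSeq_div_GammaSeq_eq (ha : 0 ≤ a) (hb : 0 ≤ b) {N : ℕ} (hN : N ≠ 0) :
    GammaSeq (a + 1) N * GammaSeq (b + 1) N / GammaSeq (a + b + 1) N =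
      N / (N + 1) * ∏ j ∈ range (N + 1), eulerFactor a b (j + 1) := by
  have hN' : (0 : ℝ) < N := by positivity
  have h_pow : (N : ℝ) ^ (a + 1) * (N : ℝ) ^ (b + 1) = N * (N : ℝ) ^ (a + b + 1) := by
    rw [← rpow_add hN', ← rpow_one_add' hN'.le (by positivity)]
    ring_nf
  have h_fact : ∏ j ∈ range (N + 1), ((j : ℝ) + 1) = (N + 1) * N.factorial := by
    exact_mod_cast (prod_range_add_one_eq_factorial (N + 1)).trans (Nat.factorial_succ N)
  have h_shift (s : ℝ) :
      ∏ j ∈ range (N + 1), (s + 1 + j) = ∏ j ∈ range (N + 1), ((j : ℝ) + 1 + s) :=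
    prod_congr rfl fun _ _ => by ring
  have h_prod_ne (s : ℝ) (hs : 0 ≤ s) : ∏ j ∈ range (N + 1), ((j : ℝ) + 1 + s) ≠ 0 :=
    prod_ne_zero_iff.2 fun _ _ => by positivity
  unfold eulerFactor GammaSeq
  simp only [prod_div_distrib, prod_mul_distrib, h_fact, h_shift, add_assoc _ a b]
  field_simp [h_prod_ne a ha, h_prod_ne b hb, h_prod_ne (a + b) (by positivity)]
  linear_combination h_pow

theorem tendsto_prod_eulerFactor (ha : 0 ≤ a) (hb : 0 ≤ b) :
    Tendsto (fun N : ℕ => ∏ j ∈ range N, eulerFactor a b (j + 1)) atTop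
      (𝓝 (Gamma (a + 1) * Gamma (b + 1) / Gamma (a + b + 1))) := by
  have h_ratio := ((GammaSeq_tendsto_Gamma (a + 1)).mul (GammaSeq_tendsto_Gamma (b + 1))).div
    (GammaSeq_tendsto_Gamma (a + b + 1)) (Gamma_pos_of_pos (by positivity)).ne'
  have h_prod := h_ratio.div (tendsto_natCast_div_add_atTop (1 : ℝ)) one_ne_zero
  rw [div_one] at h_prod
  refine (tendsto_add_atTop_iff_nat 1).mp (h_prod.congr' ?_)
  filter_upwards [eventually_ne_atTop 0] with N hN
  rw [Pi.div_apply, Pi.div_apply, GammaSeq_mul_GammaSeq_div_GammaSeq_eq ha hb hN,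
    mul_div_cancel_left₀ _ (by positivity)]

theorem eulerFactor_nat_mul_le (ha : 0 ≤ a) (hb : 0 ≤ b) {n i : ℕ} (hi : i < n) (N : ℕ) :
    eulerFactor (n * a) (n * b) ((n * N + i : ℕ) + 1) ≤ eulerFactor a b (N + 1) := by
  have hi' : (i : ℝ) + 1 ≤ n := by exact_mod_cast hi
  have hn : (0 : ℝ) < n := by linarith [(i.cast_nonneg : (0 : ℝ) ≤ i)]
  rw [← eulerFactor_mul_mul_mul (a := a) (b := b) hn.ne']
  refine eulerFactor_le_eulerFactor (by positivity) (by positivity) (by positivity) ?_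
  push_cast
  linarith

theorem prod_eulerFactor_nat_mul_le_pow (ha : 0 ≤ a) (hb : 0 ≤ b) (n N : ℕ) :
    ∏ j ∈ range (n * N), eulerFactor (n * a) (n * b) (j + 1) ≤
      (∏ j ∈ range N, eulerFactor a b (j + 1)) ^ n := by
  have h_nonneg {a b : ℝ} (ha : 0 ≤ a) (hb : 0 ≤ b) (j : ℕ) : 0 ≤ eulerFactor a b (j + 1) :=
    (eulerFactor_pos ha hb (by positivity)).le
  induction N with
  | zero => simp
  | succ N ih =>
    have h_block : ∏ i ∈ range n, eulerFactor (n * a) (n * b) ((n * N + i : ℕ) + 1) ≤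
        eulerFactor a b (N + 1) ^ n :=
      calc _ ≤ ∏ _i ∈ range n, eulerFactor a b (N + 1) :=
            prod_le_prod (fun i _ => h_nonneg (by positivity) (by positivity) _)
              fun i hi => eulerFactor_nat_mul_le ha hb (mem_range.mp hi) N
        _ = _ := by rw [prod_const, card_range]
    rw [Nat.mul_succ, prod_range_add, prod_range_succ, mul_pow]
    exact mul_le_mul ih h_block (prod_nonneg fun i _ => h_nonneg (by positivity) (by positivity) _)
      (pow_nonneg (prod_nonneg fun j _ => h_nonneg ha hb j) n)

end EulerFactor

theorem Gamma_mul_Gamma_div_Gamma_le_pow {a b : ℝ} (ha : 0 ≤ a) (hb : 0 ≤ b) (n : ℕ) :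
    Gamma (n * a + 1) * Gamma (n * b + 1) / Gamma (n * (a + b) + 1) ≤
      (Gamma (a + 1) * Gamma (b + 1) / Gamma (a + b + 1)) ^ n := by
  rcases n.eq_zero_or_pos with rfl | hn
  · simp
  have h_scaled := (tendsto_prod_eulerFactor (a := n * a) (b := n * b) (by positivity)
    (by positivity)).comp (tendsto_id.const_mul_atTop' hn)
  rw [← mul_add] at h_scaled
  exact le_of_tendsto_of_tendsto' h_scaled ((tendsto_prod_eulerFactor ha hb).pow n)
    (prod_eulerFactor_nat_mul_le_pow ha hb n)

theorem four_pow_div_factorial_le {a b : ℝ} (ha : 0 ≤ a) (hb : 0 ≤ b) (hab : a + b = 1) (n : ℕ) :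
    4 ^ n / n.factorial ≤
      (2 * Gamma (a + 1)) ^ n / Gamma (n * a + 1) *
        ((2 * Gamma (b + 1)) ^ n / Gamma (n * b + 1)) := by
  have h := Gamma_mul_Gamma_div_Gamma_le_pow ha hb n
  rw [hab, mul_one, Gamma_nat_eq_factorial, one_add_one_eq_two, Gamma_two, div_one,
    div_le_iff₀ (by positivity)] at h
  have hGa : 0 < Gamma (n * a + 1) := Gamma_pos_of_pos (by positivity)
  have hGb : 0 < Gamma (n * b + 1) := Gamma_pos_of_pos (by positivity)
  rw [div_mul_div_comm, ← mul_pow, div_le_div_iff₀ (by positivity) (by positivity)]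
  calc (4 : ℝ) ^ n * (Gamma (n * a + 1) * Gamma (n * b + 1))
      ≤ 4 ^ n * ((Gamma (a + 1) * Gamma (b + 1)) ^ n * n.factorial) := by gcongr
    _ = (2 * Gamma (a + 1) * (2 * Gamma (b + 1))) ^ n * n.factorial := by ring

theorem volume_setOf_sum_rpow_abs_le_one (ι : Type*) [Fintype ι] {p : ℝ} (hp : 1 ≤ p) :
    volume {x : EuclideanSpace ℝ ι | ∑ i, |x i| ^ p ≤ 1} =
      ENNReal.ofReal ((2 * Gamma (1 / p + 1)) ^ Fintype.card ι /
        Gamma (Fintype.card ι / p + 1)) := by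
  rcases isEmpty_or_nonempty ι with hι | hι
  · simp [volume_euclideanSpace_eq_dirac]
  have h_root : {x : ι → ℝ | ∑ i, |x i| ^ p ≤ 1} =
      {x : ι → ℝ | (∑ i, |x i| ^ p) ^ (1 / p) ≤ 1} := by
    ext x
    rw [Set.mem_ofPred_eq, Set.mem_ofPred_eq, one_div,
      rpow_inv_le_iff_of_pos (by positivity) zero_le_one (by linarith), one_rpow]
  have h_euc : volume {x : EuclideanSpace ℝ ι | ∑ i, |x i| ^ p ≤ 1} =
      volume {x : ι → ℝ | ∑ i, |x i| ^ p ≤ 1} := by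
    rw [← (PiLp.volume_preserving_ofLp ι).measure_preimage_emb
      (MeasurableEquiv.toLp 2 (ι → ℝ)).symm.measurableEmbedding]
    rfl
  rw [h_euc, h_root, volume_sum_rpow_le ι hp 1]
  simp

theorem stmt8_general (n : ℕ) (p q : ℝ) (hp : 1 < p) (hpq : 1 / p + 1 / q = 1) :
    (4 : ℝ≥0∞) ^ n / (n.factorial : ℝ≥0∞) ≤
      volume {x : EuclideanSpace ℝ (Fin n) | ∑ i, |x i| ^ p ≤ 1} *
        volume {y : EuclideanSpace ℝ (Fin n) | ∑ i, |y i| ^ q ≤ 1} := by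
  have ha : 0 < 1 / p := by positivity
  have hb : 0 < 1 / q := by linarith [(div_lt_one (by positivity : (0 : ℝ) < p)).2 hp]
  have hq : 1 ≤ q := by
    rw [← one_div_one_div q]
    exact one_le_one_div hb (by linarith)
  rw [volume_setOf_sum_rpow_abs_le_one _ hp.le, volume_setOf_sum_rpow_abs_le_one _ hq,
    ← ENNReal.ofReal_mul (by positivity), Fintype.card_fin, div_eq_mul_one_div (n : ℝ) p,
    div_eq_mul_one_div (n : ℝ) q, ← ENNReal.ofReal_natCast, ← ENNReal.ofReal_ofNat,
    ← ENNReal.ofReal_pow (by norm_num), ← ENNReal.ofReal_div_of_pos (by positivity)]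
  exact ENNReal.ofReal_le_ofReal (four_pow_div_factorial_le ha.le hb.le hpq n)

/-- Mahler's conjecture for `p`-balls: `4ⁿ/n! ≤ vol(B_pⁿ) · vol(B_qⁿ)` for
conjugate exponents `p, q`. -/
theorem stmt8 (n : ℕ) (hn : 1 ≤ n) (p q : ℝ) (hp : 1 < p) (hpq : 1 / p + 1 / q = 1) :
    (4 : ℝ≥0∞) ^ n / (n.factorial : ℝ≥0∞) ≤
      volume {x : EuclideanSpace ℝ (Fin n) | ∑ i, |x i| ^ p ≤ 1} *
        volume {y : EuclideanSpace ℝ (Fin n) | ∑ i, |y i| ^ q ≤ 1} :=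
  stmt8_general n p q hp hpq
end

section
/- Let n ≥ 1 be an integer, let 1 < p < ∞ with conjugate exponent q satisfying 1/p + 1/q = 1, and let B_p^n = {x ∈ ℝ^n : ∑_{i=1}^n |x_i|^p ≤ 1} and B_q^n = {y ∈ ℝ^n : ∑_{i=1}^n |y_i|^q ≤ 1}. Then the product of Lebesgue volumes satisfies vol(B_p^n) · vol(B_q^n) ≤ vol(B_2^n)², where B_2^n is the Euclidean unit ball of ℝ^n. -/
/-!
With `a = 1/p`, `b = 1/q` and `vol(B_pⁿ) = (2Γ(1+a))ⁿ/Γ(1+na)`, the claim is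
`(Γ(1+a)Γ(1+b)/Γ(3/2)²)ⁿ ≤ Γ(1+na)Γ(1+nb)/Γ(1+n/2)²`. For `s + t = 2u`, Euler's limit formula
writes `Γ(s)Γ(t)/Γ(u)²` as the infinite product `∏ⱼ (u+j)²/((s+j)(t+j))`. Grouping the factors of
the right-hand product into blocks of `n`, every factor in the `k`-th block dominates the `k`-th
factor of the left-hand product, because
`(x+a)(x+b)(y+n/2)² - (x+½)²(y+na)(y+nb) = (a-½)²(nx-y)(y+nx+n)` when `a + b = 1`.
-/

open MeasureTheory
open Real Filter Finset Topology

lemma half_add_sq_div_mul_le {a b n x y : ℝ} (ha : 0 ≤ a) (hb : 0 ≤ b) (hab : a + b = 1)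
    (hn : 0 ≤ n) (hx : 0 < x) (hy : 0 < y) (hyx : y ≤ n * x) :
    (1 / 2 + x) ^ 2 / ((a + x) * (b + x)) ≤ (n / 2 + y) ^ 2 / ((n * a + y) * (n * b + y)) := by
  obtain rfl : b = 1 - a := by linarith
  rw [div_le_div_iff₀ (by positivity) (by positivity)]
  nlinarith [mul_nonneg (mul_nonneg (sq_nonneg (a - 1 / 2)) (sub_nonneg.2 hyx))
    (by positivity : 0 ≤ y + n * x + n)]

theorem Finset.prod_range_mul_eq_prod_prod {M : Type*} [CommMonoid M] (f : ℕ → M) (n m : ℕ) :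
    ∏ j ∈ range (n * m), f j = ∏ k ∈ range m, ∏ i ∈ range n, f (n * k + i) := by
  induction m with
  | zero => simp
  | succ m ih => rw [Nat.mul_succ, prod_range_add, ih, prod_range_succ]

theorem Real.GammaSeq_mul_GammaSeq_div_sq {s t u : ℝ} (hs : 0 < s) (ht : 0 < t)
    (h : s + t = 2 * u) {m : ℕ} (hm : 0 < m) :
    GammaSeq s m * GammaSeq t m / GammaSeq u m ^ 2 =
      ∏ j ∈ range (m + 1), (u + j) ^ 2 / ((s + j) * (t + j)) := by
  have hm' : (0 : ℝ) < m := Nat.cast_pos.2 hm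
  have hpow : (m : ℝ) ^ s * (m : ℝ) ^ t = ((m : ℝ) ^ u) ^ 2 := by
    rw [← rpow_add hm', h, mul_comm, rpow_mul hm'.le, rpow_two]
  have hS : ∏ j ∈ range (m + 1), (s + j) ≠ 0 :=
    prod_ne_zero_iff.2 fun j _ ↦ (add_pos_of_pos_of_nonneg hs j.cast_nonneg).ne'
  have hT : ∏ j ∈ range (m + 1), (t + j) ≠ 0 :=
    prod_ne_zero_iff.2 fun j _ ↦ (add_pos_of_pos_of_nonneg ht j.cast_nonneg).ne'
  have hU : ∏ j ∈ range (m + 1), (u + j) ≠ 0 :=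
    prod_ne_zero_iff.2 fun j _ ↦ (add_pos_of_pos_of_nonneg (by linarith) j.cast_nonneg).ne'
  rw [prod_div_distrib, prod_mul_distrib, prod_pow, GammaSeq, GammaSeq, GammaSeq]
  field_simp
  rw [hpow]

theorem Real.tendsto_prod_range_div_Gamma_mul_Gamma {s t u : ℝ} (hs : 0 < s) (ht : 0 < t)
    (h : s + t = 2 * u) :
    Tendsto (fun m : ℕ ↦ ∏ j ∈ range m, (u + j) ^ 2 / ((s + j) * (t + j))) atTop
      (𝓝 (Gamma s * Gamma t / Gamma u ^ 2)) := by
  have hlim := ((GammaSeq_tendsto_Gamma s).mul (GammaSeq_tendsto_Gamma t)).div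
    ((GammaSeq_tendsto_Gamma u).pow 2) (pow_ne_zero _ (Gamma_pos_of_pos (by linarith)).ne')
  rw [← tendsto_add_atTop_iff_nat 1]
  exact hlim.congr' (eventually_atTop.2 ⟨1, fun m hm ↦ GammaSeq_mul_GammaSeq_div_sq hs ht h hm⟩)

lemma prod_range_pow_le_prod_range_mul {a b : ℝ} (ha : 0 ≤ a) (hb : 0 ≤ b) (hab : a + b = 1)
    (n m : ℕ) :
    (∏ k ∈ range m, (1 / 2 + 1 + k) ^ 2 / ((a + 1 + k) * (b + 1 + k))) ^ n ≤
      ∏ j ∈ range (n * m), (n / 2 + 1 + j) ^ 2 / ((n * a + 1 + j) * (n * b + 1 + j)) := by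
  rw [prod_range_mul_eq_prod_prod, ← prod_pow]
  refine prod_le_prod (fun k _ ↦ by positivity) fun k _ ↦ ?_
  calc _ = ∏ _i ∈ range n, (1 / 2 + 1 + k) ^ 2 / ((a + 1 + k) * (b + 1 + k)) := by
        rw [prod_const, card_range]
    _ ≤ _ := prod_le_prod (fun i _ ↦ by positivity) fun i hi ↦ ?_
  have hi : (i : ℝ) + 1 ≤ n := by exact_mod_cast mem_range.1 hi
  convert half_add_sq_div_mul_le ha hb hab n.cast_nonneg (by positivity : (0 : ℝ) < k + 1)
    (by positivity : (0 : ℝ) < n * k + i + 1) (by nlinarith) using 1 <;>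
    push_cast <;> congr 1 <;> ring

theorem Real.Gamma_mul_Gamma_div_sq_pow_le {a b : ℝ} (ha : 0 ≤ a) (hb : 0 ≤ b) (hab : a + b = 1)
    {n : ℕ} (hn : 0 < n) :
    (Gamma (a + 1) * Gamma (b + 1) / Gamma (1 / 2 + 1) ^ 2) ^ n ≤
      Gamma (n * a + 1) * Gamma (n * b + 1) / Gamma (n / 2 + 1) ^ 2 :=
  le_of_tendsto_of_tendsto'
    ((tendsto_prod_range_div_Gamma_mul_Gamma (by linarith) (by linarith)
      (by linarith)).pow n)
    ((tendsto_prod_range_div_Gamma_mul_Gamma (by positivity) (by positivity)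
      (by linear_combination (n : ℝ) * hab)).comp (tendsto_id.const_mul_atTop' hn))
    (prod_range_pow_le_prod_range_mul ha hb hab n)

noncomputable def lpBallVolume (n : ℕ) (p : ℝ) : ℝ :=
  (2 * Gamma (1 / p + 1)) ^ n / Gamma (n / p + 1)

lemma lpBallVolume_nonneg (n : ℕ) {p : ℝ} (hp : 0 < p) : 0 ≤ lpBallVolume n p := by
  unfold lpBallVolume; positivity

theorem EuclideanSpace.volume_sum_rpow_le_one {ι : Type*} [Fintype ι] [Nonempty ι] {p : ℝ}
    (hp : 1 ≤ p) :
    volume {x : EuclideanSpace ℝ ι | ∑ i, |x i| ^ p ≤ 1} =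
      ENNReal.ofReal (lpBallVolume (Fintype.card ι) p) := by
  have hset : {x : EuclideanSpace ℝ ι | ∑ i, |x i| ^ p ≤ 1} =
      (MeasurableEquiv.toLp 2 (ι → ℝ)).symm ⁻¹' {x | (∑ i, |x i| ^ p) ^ (1 / p) ≤ 1} := by
    refine Set.ext fun x ↦ ?_
    have hs : 0 ≤ ∑ i, |x i| ^ p := sum_nonneg fun i _ ↦ rpow_nonneg (abs_nonneg _) _
    change ∑ i, |x i| ^ p ≤ 1 ↔ (∑ i, |x i| ^ p) ^ (1 / p) ≤ 1
    rw [← rpow_le_rpow_iff hs zero_le_one (one_div_pos.2 (by linarith : 0 < p)), one_rpow]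
  rw [hset, (EuclideanSpace.volume_preserving_symm_measurableEquiv_toLp ι).measure_preimage_equiv,
    volume_sum_rpow_le (ι := ι) hp, ENNReal.ofReal_one, one_pow, one_mul, lpBallVolume]

lemma lpBallVolume_mul_le {p q : ℝ} (hp : 0 < p) (hq : 0 < q) (hpq : 1 / p + 1 / q = 1)
    {n : ℕ} (hn : 0 < n) :
    lpBallVolume n p * lpBallVolume n q ≤ lpBallVolume n 2 ^ 2 := by
  have key := Gamma_mul_Gamma_div_sq_pow_le (by positivity) (by positivity) hpq hn
  simp only [mul_one_div] at key
  rw [div_pow, div_le_div_iff₀ (by positivity) (by positivity)] at key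
  rw [lpBallVolume, lpBallVolume, lpBallVolume, div_mul_div_comm, div_pow,
    div_le_div_iff₀ (by positivity) (by positivity)]
  calc _ = (2 ^ n) ^ 2 *
        ((Gamma (1 / p + 1) * Gamma (1 / q + 1)) ^ n * Gamma (n / 2 + 1) ^ 2) := by ring
    _ ≤ (2 ^ n) ^ 2 *
        (Gamma (n / p + 1) * Gamma (n / q + 1) * (Gamma (1 / 2 + 1) ^ 2) ^ n) := by gcongr
    _ = _ := by ring

/-- Blaschke–Santaló for `p`-balls: `vol(B_pⁿ) · vol(B_qⁿ) ≤ vol(B_2ⁿ)²` for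
conjugate exponents `p, q`. -/
theorem stmt9 (n : ℕ) (hn : 1 ≤ n) (p q : ℝ) (hp : 1 < p) (hpq : 1 / p + 1 / q = 1) :
    volume {x : EuclideanSpace ℝ (Fin n) | ∑ i, |x i| ^ p ≤ 1} *
        volume {y : EuclideanSpace ℝ (Fin n) | ∑ i, |y i| ^ q ≤ 1} ≤
      (volume {x : EuclideanSpace ℝ (Fin n) | ∑ i, |x i| ^ (2 : ℝ) ≤ 1}) ^ 2 := by
  have hp0 : 0 < p := by linarith
  have hp1 : 1 / p < 1 := (div_lt_one hp0).2 hp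
  have hq0 : 0 < q := one_div_pos.1 (by linarith [one_div_pos.2 hp0])
  have hq1 : 1 ≤ q := (div_le_one hq0).1 (by linarith [one_div_pos.2 hp0])
  have : Nonempty (Fin n) := ⟨⟨0, hn⟩⟩
  rw [EuclideanSpace.volume_sum_rpow_le_one hp.le, EuclideanSpace.volume_sum_rpow_le_one hq1,
    EuclideanSpace.volume_sum_rpow_le_one one_le_two, Fintype.card_fin,
    ← ENNReal.ofReal_mul (lpBallVolume_nonneg n hp0),
    ← ENNReal.ofReal_pow (lpBallVolume_nonneg n two_pos)]
  exact ENNReal.ofReal_le_ofReal (lpBallVolume_mul_le hp0 hq0 hpq hn)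
end

section
/- For every integer m ≥ 1, ∏_{k=1}^{∞} [(2k+1)^{2m−2}·(2k+2m)] / (2k+2)^{2m−1} = (4/π)^{m−1} / m!. -/
open Real Filter Finset Topology

/-! Write the factor at `x = k + 1` as `F_m(x)`. Then `F_1 = 1` and `F_{m+1} = F_m · r_m` with
`r_m(x) = (2x+1)²(2x+2m+2) / ((2x+2)²(2x+2m)) ≤ 1`. The ratio `r_m(x)` splits into the Wallis
factor `(2x+1)(2x+3)/(2x+2)²`, whose product over `x ≥ 1` is `8/(3π)`, and a telescoping factor
whose product is `3/(2m+2)`; so the partial products of `r_m` tend to `4/(π(m+1))`, and induction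
on `m` gives the limit `(4/π)^(m-1)/m!`. Since all factors lie in `(0, 1]`, the convergence of the
partial products is unconditional. -/

lemma Finset.prod_range_div₀ {K : Type*} [Field K] (f : ℕ → K) (hf : ∀ i, f i ≠ 0) (n : ℕ) :
    ∏ i ∈ range n, f (i + 1) / f i = f n / f 0 := by
  refine prod_range_induction _ (fun n => f n / f 0) (div_self (hf 0)) n fun k _ => ?_
  field_simp [hf k]

lemma Filter.Tendsto.prod_range_add_one {K : Type*} [Field K] [TopologicalSpace K]
    [ContinuousMul K] {f : ℕ → K} {L : K}
    (h : Tendsto (fun n => ∏ i ∈ range n, f i) atTop (𝓝 L)) (hf : f 0 ≠ 0) :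
    Tendsto (fun n => ∏ i ∈ range n, f (i + 1)) atTop (𝓝 (L / f 0)) := by
  refine ((h.comp (tendsto_add_atTop_nat 1)).div_const (f 0)).congr fun n => ?_
  simp [prod_range_succ', hf]

lemma Real.hasProd_of_tendsto_prod_range {f : ℕ → ℝ} {L : ℝ} (hpos : ∀ k, 0 < f k)
    (hle : ∀ k, f k ≤ 1) (hL : 0 < L)
    (h : Tendsto (fun n => ∏ k ∈ range n, f k) atTop (𝓝 L)) : HasProd f L := by
  have hlog : HasSum (fun k => -log (f k)) (-log L) := by
    refine (hasSum_iff_tendsto_nat_of_nonneg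
      (fun k => neg_nonneg.2 (log_nonpos (hpos k).le (hle k))) _).2 ?_
    refine ((continuousAt_log hL.ne').tendsto.comp h).neg.congr fun n => ?_
    simp [log_prod fun k _ => (hpos k).ne']
  rw [← exp_log hL]
  exact hasProd_of_hasSum_log hpos (by simpa using hlog.neg)

lemma tendsto_prod_wallis_succ :
    Tendsto (fun n => ∏ k ∈ range n, (2 * ((k : ℝ) + 1) + 1) * (2 * ((k : ℝ) + 1) + 3) /
      (2 * ((k : ℝ) + 1) + 2) ^ 2) atTop (𝓝 (8 / (3 * π))) := by
  have hwallis : Tendsto (fun n => ∏ k ∈ range n, (2 * (k : ℝ) + 1) * (2 * k + 3) /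
      (2 * k + 2) ^ 2) atTop (𝓝 (2 / π)) := by
    rw [← inv_div]
    refine (Real.tendsto_prod_pi_div_two.inv₀ (by positivity)).congr fun n => ?_
    rw [← prod_inv_distrib]
    refine prod_congr rfl fun k _ => ?_
    field_simp
  convert hwallis.prod_range_add_one (by norm_num) using 2
  · push_cast; rfl
  · field_simp; norm_num

noncomputable def wallisFactor (m : ℕ) (x : ℝ) : ℝ :=
  (2 * x + 1) ^ (2 * m - 2) * (2 * x + 2 * m) / (2 * x + 2) ^ (2 * m - 1)

noncomputable def wallisFactorRatio (m : ℕ) (x : ℝ) : ℝ :=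
  (2 * x + 1) ^ 2 * (2 * x + 2 * m + 2) / ((2 * x + 2) ^ 2 * (2 * x + 2 * m))

section

variable {m : ℕ} {x : ℝ}

lemma wallisFactor_pos (hx : 0 < x) : 0 < wallisFactor m x := by
  unfold wallisFactor
  positivity

lemma wallisFactor_one (hx : 0 ≤ x) : wallisFactor 1 x = 1 := by
  have : 2 * x + 2 ≠ 0 := by positivity
  simp [wallisFactor, this]

lemma wallisFactor_succ (hm : 1 ≤ m) (hx : 0 ≤ x) :
    wallisFactor (m + 1) x = wallisFactor m x * wallisFactorRatio m x := by
  obtain ⟨e, rfl⟩ := Nat.exists_eq_add_of_le' hm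
  have h2 : 2 * x + 2 ≠ 0 := by positivity
  have hm' : 2 * x + 2 * ((e + 1 : ℕ) : ℝ) ≠ 0 := by positivity
  simp only [wallisFactor, wallisFactorRatio, show 2 * (e + 1 + 1) - 2 = 2 * e + 2 by omega,
    show 2 * (e + 1 + 1) - 1 = 2 * e + 3 by omega, show 2 * (e + 1) - 2 = 2 * e by omega,
    show 2 * (e + 1) - 1 = 2 * e + 1 by omega]
  field_simp
  push_cast
  ring

lemma wallisFactorRatio_pos (hm : 1 ≤ m) (hx : 0 ≤ x) : 0 < wallisFactorRatio m x := by
  have : (0 : ℝ) < m := by exact_mod_cast hm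
  unfold wallisFactorRatio
  positivity

lemma wallisFactorRatio_le_one (hm : 1 ≤ m) (hx : 0 ≤ x) : wallisFactorRatio m x ≤ 1 := by
  have hm' : (1 : ℝ) ≤ m := by exact_mod_cast hm
  rw [wallisFactorRatio, div_le_one (by positivity)]
  nlinarith [mul_nonneg hx (sub_nonneg.2 hm')]

lemma wallisFactor_le_one (hm : 1 ≤ m) (hx : 0 ≤ x) : wallisFactor m x ≤ 1 := by
  induction m, hm using Nat.le_induction with
  | base => rw [wallisFactor_one hx]
  | succ m hm ih =>
    rw [wallisFactor_succ hm hx]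
    exact mul_le_one₀ ih (wallisFactorRatio_pos hm hx).le (wallisFactorRatio_le_one hm hx)

lemma wallisFactorRatio_eq (hx : 0 < x) :
    wallisFactorRatio m x = (2 * x + 1) * (2 * x + 3) / (2 * x + 2) ^ 2 *
      ((2 * (x + 1) + 2 * m) / (2 * (x + 1) + 1) / ((2 * x + 2 * m) / (2 * x + 1))) := by
  have : 2 * x + 2 * m ≠ 0 := by positivity
  unfold wallisFactorRatio
  field_simp
  ring

end

lemma tendsto_prod_wallisFactorRatio (m : ℕ) :
    Tendsto (fun n => ∏ k ∈ range n, wallisFactorRatio m (k + 1)) atTop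
      (𝓝 (4 / (π * (m + 1)))) := by
  set g : ℕ → ℝ := fun i => (2 * ((i : ℝ) + 1) + 2 * m) / (2 * ((i : ℝ) + 1) + 1) with hg_def
  have hg : ∀ i, g i ≠ 0 := fun i => by positivity
  have hprod : ∀ n, (∏ k ∈ range n, (2 * ((k : ℝ) + 1) + 1) * (2 * ((k : ℝ) + 1) + 3) /
      (2 * ((k : ℝ) + 1) + 2) ^ 2) * (g n / g 0) = ∏ k ∈ range n, wallisFactorRatio m (k + 1) := by
    intro n
    rw [← prod_range_div₀ g hg, ← prod_mul_distrib]
    refine prod_congr rfl fun k _ => ?_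
    rw [wallisFactorRatio_eq (by positivity), hg_def]
    push_cast
    ring_nf
  have hg_lim : Tendsto g atTop (𝓝 1) := by
    convert tendsto_add_mul_div_add_mul_atTop_nhds (2 + 2 * (m : ℝ)) 3 2 two_ne_zero using 2
    · simp only [hg_def]; ring_nf
    · norm_num
  convert (tendsto_prod_wallis_succ.mul (hg_lim.div_const (g 0))).congr hprod using 2
  simp only [hg_def]
  field_simp
  ring

lemma tendsto_prod_wallisFactor {m : ℕ} (hm : 1 ≤ m) :
    Tendsto (fun n => ∏ k ∈ range n, wallisFactor m (k + 1)) atTop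
      (𝓝 ((4 / π) ^ (m - 1) / m.factorial)) := by
  induction m, hm using Nat.le_induction with
  | base => simp [fun k : ℕ => wallisFactor_one (by positivity : (0 : ℝ) ≤ k + 1)]
  | succ m hm ih =>
    have hprod : ∀ n, (∏ k ∈ range n, wallisFactor m (k + 1)) *
        ∏ k ∈ range n, wallisFactorRatio m (k + 1) =
        ∏ k ∈ range n, wallisFactor (m + 1) (k + 1) := fun n => by
      rw [← prod_mul_distrib]
      exact prod_congr rfl fun k _ => (wallisFactor_succ hm (by positivity)).symm
    convert (ih.mul (tendsto_prod_wallisFactorRatio m)).congr hprod using 2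
    obtain ⟨e, rfl⟩ := Nat.exists_eq_add_of_le' hm
    simp only [Nat.add_sub_cancel, Nat.factorial_succ, pow_succ]
    push_cast
    field_simp

/-- Corollary III.1: for `m ≥ 1`,
`∏_{k=1}^∞ (2k+1)^(2m-2)(2k+2m)/(2k+2)^(2m-1) = (4/π)^(m-1)/m!`. -/
theorem stmt14 (m : ℕ) (hm : 1 ≤ m) :
    ∏' k : ℕ,
        (2 * ((k : ℝ) + 1) + 1) ^ (2 * m - 2) * (2 * ((k : ℝ) + 1) + 2 * (m : ℝ)) /
          (2 * ((k : ℝ) + 1) + 2) ^ (2 * m - 1) =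
      (4 / π) ^ (m - 1) / (m.factorial : ℝ) :=
  (Real.hasProd_of_tendsto_prod_range (fun k => wallisFactor_pos (by positivity))
    (fun k => wallisFactor_le_one hm (by positivity)) (by positivity)
    (tendsto_prod_wallisFactor hm)).tprod_eq
end

section
/- For every integer n ≥ 2, one has 1/n! < e^{−σ_n}, where σ_n = ∑_{m=2}^{n} C(n,m) · ∑_{k=1}^{∞} k^{n−m}/(k+1)^n, C(n,m) denotes the binomial coefficient, and each inner series (hence σ_n) converges. -/
/-!
With `x = k + 1`, the binomial theorem turns the inner sum `∑ₘ C(n,m) xⁿ⁻ᵐ/(x+1)ⁿ` into `1 - r(x)`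
with `r(x) = xⁿ⁻¹(x+n)/(x+1)ⁿ ∈ (0, 1)`, so `σₙ = ∑ₖ (1 - r(k+1)) < ∑ₖ -log r(k+1)`.
The product `∏_{x=1}^{K} r(x) = (K+1)(K+2)⋯(K+n) / (n! (K+1)ⁿ)` telescopes and is at least `1/n!`,
so `∑ₖ -log r(k+1) ≤ log n!`.
-/

open Finset Real
open scoped Nat

theorem sum_Icc_two_choose_mul_pow {R : Type*} [CommRing R] {n : ℕ} (hn : 1 ≤ n) (x : R) :
    ∑ m ∈ Icc 2 n, (n.choose m : R) * x ^ (n - m) = (x + 1) ^ n - x ^ (n - 1) * (x + n) := by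
  obtain ⟨n, rfl⟩ := Nat.exists_eq_add_of_le' hn
  have hrange : range (n + 1 + 1) = insert 0 (insert 1 (Icc 2 (n + 1))) := by
    ext m; simp only [mem_range, mem_insert, mem_Icc]; omega
  rw [add_comm x, add_pow, hrange, sum_insert (by simp), sum_insert (by simp)]
  simp only [Nat.choose_zero_right, Nat.choose_one_right, pow_one, one_pow, mul_one,
    Nat.sub_zero, Nat.add_sub_cancel, Nat.cast_one, Nat.cast_add]
  simp_rw [one_mul, mul_comm (x ^ _)]
  ring

/-- The share of `(x + 1) ^ n` taken by the two leading terms `x ^ n + n * x ^ (n - 1)` of its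
binomial expansion. -/
noncomputable def headRatio (n : ℕ) (x : ℝ) : ℝ := x ^ (n - 1) * (x + n) / (x + 1) ^ n

theorem sum_Icc_two_choose_mul_pow_div {n : ℕ} (hn : 1 ≤ n) {x : ℝ} (hx : 0 ≤ x) :
    ∑ m ∈ Icc 2 n, (n.choose m : ℝ) * (x ^ (n - m) / (x + 1) ^ n) = 1 - headRatio n x := by
  have : (x + 1) ^ n ≠ 0 := by positivity
  simp only [← mul_div_assoc, ← sum_div, sum_Icc_two_choose_mul_pow hn, headRatio]
  field_simp

theorem headRatio_pos {n : ℕ} {x : ℝ} (hx : 0 < x) : 0 < headRatio n x := by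
  unfold headRatio; positivity

theorem headRatio_lt_one {n : ℕ} (hn : 2 ≤ n) {x : ℝ} (hx : 0 ≤ x) : headRatio n x < 1 := by
  have hpos : 0 < ∑ m ∈ Icc 2 n, (n.choose m : ℝ) * (x ^ (n - m) / (x + 1) ^ n) :=
    sum_pos' (fun m _ => by positivity) ⟨n, by simp [hn], by simp; positivity⟩
  linarith [sum_Icc_two_choose_mul_pow_div (by omega : 1 ≤ n) hx]

theorem pow_div_pow_le_one_sub_headRatio {n m : ℕ} (hm : m ∈ Icc 2 n) {x : ℝ} (hx : 0 ≤ x) :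
    x ^ (n - m) / (x + 1) ^ n ≤ 1 - headRatio n x := by
  obtain ⟨h2m, hmn⟩ := mem_Icc.1 hm
  have hchoose : (1 : ℝ) ≤ n.choose m := by exact_mod_cast Nat.choose_pos hmn
  calc x ^ (n - m) / (x + 1) ^ n ≤ n.choose m * (x ^ (n - m) / (x + 1) ^ n) :=
        le_mul_of_one_le_left (by positivity) hchoose
    _ ≤ ∑ m ∈ Icc 2 n, (n.choose m : ℝ) * (x ^ (n - m) / (x + 1) ^ n) :=
        single_le_sum (f := fun m => (n.choose m : ℝ) * (x ^ (n - m) / (x + 1) ^ n))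
          (fun _ _ => by positivity) hm
    _ = 1 - headRatio n x := sum_Icc_two_choose_mul_pow_div (by omega) hx

theorem prod_range_headRatio {n : ℕ} (hn : 1 ≤ n) (K : ℕ) :
    ∏ k ∈ range K, headRatio n (k + 1) =
      (∏ i ∈ range n, ((K : ℝ) + 1 + i)) / (n ! * ((K : ℝ) + 1) ^ n) := by
  induction K with
  | zero =>
    have : ∏ i ∈ range n, (1 + (i : ℝ)) = n ! := by
      simp_rw [add_comm (1 : ℝ)]
      exact_mod_cast prod_range_add_one_eq_factorial n
    simp [this, Nat.factorial_ne_zero]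
  | succ K ih =>
    have hshift : (∏ i ∈ range n, ((K : ℝ) + 1 + i)) * ((K : ℝ) + 1 + n) =
        ((K : ℝ) + 1) * ∏ i ∈ range n, ((K : ℝ) + 1 + 1 + i) := by
      rw [← prod_range_succ (fun i : ℕ => (K : ℝ) + 1 + i), prod_range_succ']
      push_cast
      simp only [add_assoc, add_comm (1 : ℝ), mul_comm, add_zero]
    obtain ⟨n, rfl⟩ := Nat.exists_eq_add_of_le' hn
    rw [prod_range_succ, ih, headRatio]
    push_cast at hshift ⊢
    field_simp
    linear_combination ((K : ℝ) + 1) ^ n * hshift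

theorem inv_factorial_le_prod_range_headRatio {n : ℕ} (hn : 1 ≤ n) (K : ℕ) :
    (n ! : ℝ)⁻¹ ≤ ∏ k ∈ range K, headRatio n (k + 1) := by
  have hpow : ((K : ℝ) + 1) ^ n ≤ ∏ i ∈ range n, ((K : ℝ) + 1 + i) := by
    simpa using prod_le_prod (s := range n) (f := fun _ => (K : ℝ) + 1)
      (fun _ _ => by positivity) fun i _ => le_add_of_nonneg_right i.cast_nonneg
  rw [prod_range_headRatio hn, mul_comm, ← div_div, le_div_iff₀ (by positivity),
    inv_mul_cancel₀ (by positivity), one_le_div (by positivity)]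
  exact hpow

theorem one_sub_headRatio_lt_neg_log {n : ℕ} (hn : 2 ≤ n) {x : ℝ} (hx : 0 < x) :
    1 - headRatio n x < -log (headRatio n x) := by
  linarith [log_lt_sub_one_of_pos (headRatio_pos hx) (headRatio_lt_one hn hx.le).ne]

theorem neg_log_headRatio_pos {n : ℕ} (hn : 2 ≤ n) {x : ℝ} (hx : 0 < x) :
    0 < -log (headRatio n x) :=
  neg_pos.2 (log_neg (headRatio_pos hx) (headRatio_lt_one hn hx.le))

theorem sum_range_neg_log_headRatio_le {n : ℕ} (hn : 1 ≤ n) (K : ℕ) :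
    ∑ k ∈ range K, -log (headRatio n (k + 1)) ≤ log n ! := by
  rw [sum_neg_distrib, ← log_prod fun k _ => (headRatio_pos k.cast_add_one_pos).ne', neg_le,
    ← log_inv]
  exact log_le_log (by positivity) (inv_factorial_le_prod_range_headRatio hn K)

theorem summable_neg_log_headRatio {n : ℕ} (hn : 2 ≤ n) :
    Summable fun k : ℕ => -log (headRatio n (k + 1)) :=
  summable_of_sum_range_le (fun k => (neg_log_headRatio_pos hn k.cast_add_one_pos).le)
    (sum_range_neg_log_headRatio_le (by omega))

theorem tsum_neg_log_headRatio_le {n : ℕ} (hn : 2 ≤ n) :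
    ∑' k : ℕ, -log (headRatio n (k + 1)) ≤ log n ! :=
  Real.tsum_le_of_sum_range_le (fun k => (neg_log_headRatio_pos hn k.cast_add_one_pos).le)
    (sum_range_neg_log_headRatio_le (by omega))

/-- Remark III.1: for `n ≥ 2`, each series `∑_{k=1}^∞ k^(n-m)/(k+1)ⁿ` (for
`2 ≤ m ≤ n`) converges, and with
`σ_n = ∑_{m=2}^n C(n,m) ∑_{k=1}^∞ k^(n-m)/(k+1)ⁿ` one has `1/n! < e^(-σ_n)`. -/
theorem stmt19 (n : ℕ) (hn : 2 ≤ n) :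
    (∀ m ∈ Finset.Icc 2 n, Summable (fun k : ℕ =>
      ((k : ℝ) + 1) ^ (n - m) / (((k : ℝ) + 1) + 1) ^ n)) ∧
    1 / (n.factorial : ℝ) <
      Real.exp (-(∑ m ∈ Finset.Icc 2 n, (n.choose m : ℝ) *
        ∑' k : ℕ, ((k : ℝ) + 1) ^ (n - m) / (((k : ℝ) + 1) + 1) ^ n)) := by
  have hsummable : ∀ m ∈ Icc 2 n, Summable fun k : ℕ =>
      ((k : ℝ) + 1) ^ (n - m) / (((k : ℝ) + 1) + 1) ^ n := fun m hm =>
    (summable_neg_log_headRatio hn).of_nonneg_of_le (fun _ => by positivity) fun k =>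
      (pow_div_pow_le_one_sub_headRatio hm (by positivity)).trans
        (one_sub_headRatio_lt_neg_log hn (by positivity)).le
  refine ⟨hsummable, ?_⟩
  have hσ : ∑ m ∈ Icc 2 n, (n.choose m : ℝ) *
      ∑' k : ℕ, ((k : ℝ) + 1) ^ (n - m) / (((k : ℝ) + 1) + 1) ^ n =
      ∑' k : ℕ, (1 - headRatio n (k + 1)) := by
    simp_rw [← tsum_mul_left]
    rw [← Summable.tsum_finsetSum fun m hm => (hsummable m hm).mul_left _]
    exact tsum_congr fun k => sum_Icc_two_choose_mul_pow_div (by omega) (by positivity)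
  have hσ_lt : ∑' k : ℕ, (1 - headRatio n (k + 1)) < log n ! :=
    calc _ < ∑' k : ℕ, -log (headRatio n (k + 1)) :=
          Summable.tsum_lt_tsum_of_nonneg (i := 0)
            (fun _ => sub_nonneg.2 (headRatio_lt_one hn (by positivity)).le)
            (fun _ => (one_sub_headRatio_lt_neg_log hn (by positivity)).le)
            (one_sub_headRatio_lt_neg_log hn (by positivity)) (summable_neg_log_headRatio hn)
      _ ≤ log n ! := tsum_neg_log_headRatio_le hn
  rw [hσ, one_div, ← exp_log (by positivity : (0 : ℝ) < n !), ← exp_neg, exp_lt_exp,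
    neg_lt_neg_iff]
  exact hσ_lt
end
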